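/- arXiv:2309.01753 — 8 statements merged into one kernel-verified Lean document; each statement's English description precedes it below -/
import Mathlib

section
/- Let Y be compact and f, g continuous. Then for every x ∈ X, the penalized hyper-objective converges pointwise to the hyper-objective as the penalty parameter tends to zero: lim_{σ→0⁺} ψ_σ(x) = ψ(x); equivalently, the right derivative of the value function σ ↦ l(x,σ) at σ = 0⁺ exists and equals ψ(x). -/
/-!
Write `v σ = min_Y (σ F + G)`, `S = argmin_Y G` and `ψ = min_S F`. Testing `v σ` at points of
`S` gives `(v σ - v 0)/σ ≤ ψ`. Conversely, if `y_σ` minimizes `σ F + G`, then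
`(v σ - v 0)/σ ≥ F y_σ` and `G y_σ - v 0 ≤ σ (ψ - min_Y F)`, so `y_σ` is an almost-minimizer of `G`.
By compactness, points at which `G` is almost minimal and `F ≤ c < ψ` do not exist, hence
`F y_σ > c` for small `σ`.
-/

open Set Filter Topology

section PenaltyLimit

variable {E : Type*} {Y : Set E} {F G : E → ℝ}

lemma sInf_image_eq_of_forall_le {y : E} (hy : y ∈ Y) (hmin : ∀ z ∈ Y, G y ≤ G z) :
    sInf (G '' Y) = G y :=
  IsLeast.csInf_eq ⟨mem_image_of_mem G hy, forall_mem_image.2 hmin⟩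

variable [TopologicalSpace E]

lemma nonempty_argmin (hY : IsCompact Y) (hne : Y.Nonempty) (hG : Continuous G) :
    {y ∈ Y | ∀ z ∈ Y, G y ≤ G z}.Nonempty :=
  let ⟨y, hy, hmin⟩ := hY.exists_isMinOn hne hG.continuousOn
  ⟨y, hy, isMinOn_iff.1 hmin⟩

lemma sInf_penalty_le (hY : IsCompact Y) (hF : Continuous F) (hG : Continuous G) (σ : ℝ)
    {y : E} (hy : y ∈ Y) : sInf ((fun y => σ * F y + G y) '' Y) ≤ σ * F y + G y :=
  csInf_le (hY.bddBelow_image (by fun_prop)) (mem_image_of_mem _ hy)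

lemma penalty_quotient_le (hY : IsCompact Y) (hne : Y.Nonempty) (hF : Continuous F)
    (hG : Continuous G) {σ : ℝ} (hσ : 0 < σ) :
    (sInf ((fun y => σ * F y + G y) '' Y) - sInf (G '' Y)) / σ ≤
      sInf (F '' {y ∈ Y | ∀ z ∈ Y, G y ≤ G z}) := by
  refine le_csInf ((nonempty_argmin hY hne hG).image F) (forall_mem_image.2 fun y hy => ?_)
  rw [div_le_iff₀ hσ, sInf_image_eq_of_forall_le hy.1 hy.2]
  linarith [sInf_penalty_le hY hF hG σ hy.1]

lemma exists_gt_forall_lt_of_le (hY : IsCompact Y) (hF : Continuous F) (hG : Continuous G)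
    {a c : ℝ} (h : ∀ y ∈ Y, G y ≤ a → c < F y) :
    ∃ a' > a, ∀ y ∈ Y, G y < a' → c < F y := by
  have hK : IsCompact {y ∈ Y | F y ≤ c} := hY.inter_right (isClosed_le hF continuous_const)
  obtain ⟨a', ha, hle⟩ := hK.exists_forall_le' hG.continuousOn
    fun y hy => lt_of_not_ge fun hGy => (h y hy.1 hGy).not_ge hy.2
  exact ⟨a', ha, fun y hy hGy => lt_of_not_ge fun hFy => (hle y ⟨hy, hFy⟩).not_gt hGy⟩

lemma eventually_lt_penalty_quotient (hY : IsCompact Y) (hne : Y.Nonempty) (hF : Continuous F)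
    (hG : Continuous G) {c : ℝ} (hc : c < sInf (F '' {y ∈ Y | ∀ z ∈ Y, G y ≤ G z})) :
    ∀ᶠ σ in 𝓝[>] 0, c < (sInf ((fun y => σ * F y + G y) '' Y) - sInf (G '' Y)) / σ := by
  set ψ := sInf (F '' {y ∈ Y | ∀ z ∈ Y, G y ≤ G z})
  have hGbdd := hY.bddBelow_image hG.continuousOn
  obtain ⟨m, hm⟩ := hY.bddBelow_image hF.continuousOn
  obtain ⟨a', ha', hnear⟩ : ∃ a' > sInf (G '' Y), ∀ y ∈ Y, G y < a' → c < F y := by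
    refine exists_gt_forall_lt_of_le hY hF hG fun y hy hGy => hc.trans_le ?_
    refine csInf_le ((hY.bddBelow_image hF.continuousOn).mono (image_mono (sep_subset _ _))) ?_
    exact mem_image_of_mem F ⟨hy, fun z hz => hGy.trans (csInf_le hGbdd (mem_image_of_mem G hz))⟩
  have hsmall : ∀ᶠ σ in 𝓝[>] (0 : ℝ), σ * (ψ - m) < a' - sInf (G '' Y) := by
    have : Tendsto (fun σ : ℝ => σ * (ψ - m)) (𝓝 0) (𝓝 0) :=
      (continuous_mul_const _).tendsto' 0 0 (zero_mul _)
    exact nhdsWithin_le_nhds (this.eventually (gt_mem_nhds (sub_pos.2 ha')))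
  filter_upwards [hsmall, self_mem_nhdsWithin] with σ hσsmall hσ
  obtain ⟨yσ, hyσ, hvσ⟩ := hY.exists_sInf_image_eq hne
    (show Continuous fun y => σ * F y + G y by fun_prop).continuousOn
  have hupper := (div_le_iff₀ hσ).1 (penalty_quotient_le hY hne hF hG hσ)
  have hGyσ : sInf (G '' Y) ≤ G yσ := csInf_le hGbdd (mem_image_of_mem G hyσ)
  have hFyσ : m ≤ F yσ := hm (mem_image_of_mem F hyσ)
  -- `G yσ - v 0 ≤ σ (ψ - F yσ) ≤ σ (ψ - m)`
  have hcF : c < F yσ := hnear yσ hyσ (by linarith [mul_le_mul_of_nonneg_left hFyσ hσ.le])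
  rw [lt_div_iff₀ hσ, hvσ]
  linarith [mul_lt_mul_of_pos_right hcF hσ]

theorem tendsto_penalty_quotient (hY : IsCompact Y) (hne : Y.Nonempty) (hF : Continuous F)
    (hG : Continuous G) :
    Tendsto (fun σ => (sInf ((fun y => σ * F y + G y) '' Y) - sInf (G '' Y)) / σ) (𝓝[>] 0)
      (𝓝 (sInf (F '' {y ∈ Y | ∀ z ∈ Y, G y ≤ G z}))) :=
  tendsto_order.2 ⟨fun _ hc => eventually_lt_penalty_quotient hY hne hF hG hc,
    fun _ hc => eventually_mem_nhdsWithin.mono fun _ hσ =>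
      (penalty_quotient_le hY hne hF hG hσ).trans_lt hc⟩

end PenaltyLimit

theorem stmt0_general
    (dx dy : ℕ)
    (Y : Set (EuclideanSpace ℝ (Fin dy)))
    (hYne : Y.Nonempty) (hYcomp : IsCompact Y)
    (f g : EuclideanSpace ℝ (Fin dx) → EuclideanSpace ℝ (Fin dy) → ℝ)
    (hf : Continuous (Function.uncurry f)) (hg : Continuous (Function.uncurry g))
    -- the value function `l(x,σ) = min_{y ∈ Y} (σ f(x,y) + g(x,y))`
    (l : EuclideanSpace ℝ (Fin dx) → ℝ → ℝ)
    (hl : ∀ x σ, l x σ = sInf ((fun y => σ * f x y + g x y) '' Y))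
    -- the lower-level solution set `T(x,σ) = argmin_{y ∈ Y} (σ f(x,y) + g(x,y))`
    (T : EuclideanSpace ℝ (Fin dx) → ℝ → Set (EuclideanSpace ℝ (Fin dy)))
    (hT : ∀ x σ, T x σ = {y ∈ Y | ∀ z ∈ Y, σ * f x y + g x y ≤ σ * f x z + g x z})
    -- the hyper-objective `ψ(x) = min_{y ∈ T(x,0)} f(x,y)`
    (ψ : EuclideanSpace ℝ (Fin dx) → ℝ)
    (hψ : ∀ x, ψ x = sInf ((fun y => f x y) '' T x 0))
    (x : EuclideanSpace ℝ (Fin dx)) :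
    Tendsto (fun σ : ℝ => (l x σ - l x 0) / σ) (nhdsWithin 0 (Ioi 0)) (nhds (ψ x)) := by
  have hfx : Continuous (f x) := hf.comp (Continuous.prodMk_right x)
  have hgx : Continuous (g x) := hg.comp (Continuous.prodMk_right x)
  simpa only [hl, hψ, hT, zero_mul, zero_add] using tendsto_penalty_quotient hYcomp hYne hfx hgx

/-- For compact `Y` and continuous `f, g`, the penalized hyper-objective
`ψ_σ(x) = (l(x,σ) - l(x,0))/σ` converges pointwise to the hyper-objective
`ψ(x) = min_{y ∈ T(x,0)} f(x,y)` as `σ → 0⁺`; equivalently, the right derivative of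
`σ ↦ l(x,σ)` at `0⁺` exists and equals `ψ(x)`. -/
theorem stmt0
    (dx dy : ℕ)
    (X : Set (EuclideanSpace ℝ (Fin dx)))
    (Y : Set (EuclideanSpace ℝ (Fin dy)))
    (hXne : X.Nonempty) (hXclosed : IsClosed X) (hXconv : Convex ℝ X)
    (hYne : Y.Nonempty) (hYcomp : IsCompact Y) (hYconv : Convex ℝ Y)
    (f g : EuclideanSpace ℝ (Fin dx) → EuclideanSpace ℝ (Fin dy) → ℝ)
    (hf : Continuous (Function.uncurry f)) (hg : Continuous (Function.uncurry g))
    -- the value function `l(x,σ) = min_{y ∈ Y} (σ f(x,y) + g(x,y))`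
    (l : EuclideanSpace ℝ (Fin dx) → ℝ → ℝ)
    (hl : ∀ x σ, l x σ = sInf ((fun y => σ * f x y + g x y) '' Y))
    -- the lower-level solution set `T(x,σ) = argmin_{y ∈ Y} (σ f(x,y) + g(x,y))`
    (T : EuclideanSpace ℝ (Fin dx) → ℝ → Set (EuclideanSpace ℝ (Fin dy)))
    (hT : ∀ x σ, T x σ = {y ∈ Y | ∀ z ∈ Y, σ * f x y + g x y ≤ σ * f x z + g x z})
    -- the hyper-objective `ψ(x) = min_{y ∈ T(x,0)} f(x,y)`
    (ψ : EuclideanSpace ℝ (Fin dx) → ℝ)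
    (hψ : ∀ x, ψ x = sInf ((fun y => f x y) '' T x 0))
    (x : EuclideanSpace ℝ (Fin dx)) (hx : x ∈ X) :
    Tendsto (fun σ : ℝ => (l x σ - l x 0) / σ) (nhdsWithin 0 (Ioi 0)) (nhds (ψ x)) :=
  stmt0_general dx dy Y hYne hYcomp f g hf hg l hl T hT ψ hψ x
end

section
/- Suppose the proximal error-bound assumption (prox-EB) holds with parameters μ, δ, σ₀ > 0. There is a universal constant C > 0 (independent of all problem data) such that for every x ∈ X and every σ ∈ (0, min(σ₀, δ/(2 C_f))], one has 0 ≤ ψ(x) − ψ_σ(x) ≤ C · (l_{f,0}²/μ) · σ; in particular the penalized hyper-objective never exceeds the hyper-objective: ψ_σ(x) ≤ ψ(x). -/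
/-!
Fix `x` and write `φ = f x ·`, `γ = g x ·`. If `y_σ ∈ T(σ)` and `w ∈ T(0)`, comparing the two
minimization problems gives `σ φ(y_σ) ≤ l(σ) − l(0) ≤ σ φ(w)`; the right half is `ψ_σ ≤ ψ`.

For the other half we walk from `y_σ ∈ T(σ)` down to `T(0)` in small steps `τ → τ'`. A minimizer
`z` for `τ` is an approximate fixed point of the prox map for `τ'`: its residual is at most
`2 (τ − τ') l_{f,0}`, which is `≤ δ` once the step is short. Prox-EB then yields `z' ∈ T(τ')`
with `‖z' − z‖ ≤ 2 (τ − τ') l_{f,0} / μ`, so `φ` grows by at most `2 l_{f,0}² (τ − τ') / μ`.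
Summing over the steps gives `ψ ≤ φ(y_σ) + 2 (l_{f,0}²/μ) σ ≤ ψ_σ + 2 (l_{f,0}²/μ) σ`.
-/

open Set Metric

theorem abs_sub_le_of_norm_gradient_le {F : Type*} [NormedAddCommGroup F] [InnerProductSpace ℝ F]
    [CompleteSpace F] {s : Set F} {φ : F → ℝ} {L : ℝ} (hs : Convex ℝ s)
    (hφ : ∀ y ∈ s, DifferentiableAt ℝ φ y) (hbound : ∀ y ∈ s, ‖gradient φ y‖ ≤ L) :
    ∀ a ∈ s, ∀ b ∈ s, |φ a - φ b| ≤ L * ‖a - b‖ := fun a ha b hb => by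
  simpa [Real.norm_eq_abs] using
    hs.norm_image_sub_le_of_norm_fderiv_le hφ (fun y hy => by simpa [gradient] using hbound y hy)
      hb ha

theorem exists_mem_le_add_mul_of_forall_step {α : Type*} {S : ℝ → Set α} {φ : α → ℝ}
    {K h σ : ℝ} (hh : 0 < h) (hσ : 0 ≤ σ)
    (hstep : ∀ τ τ', 0 ≤ τ' → τ' ≤ τ → τ ≤ σ → τ - τ' ≤ h →
      ∀ z ∈ S τ, ∃ z' ∈ S τ', φ z' ≤ φ z + K * (τ - τ'))
    {z : α} (hz : z ∈ S σ) : ∃ z' ∈ S 0, φ z' ≤ φ z + K * σ := by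
  suffices H : ∀ n : ℕ, ∀ τ, 0 ≤ τ → τ ≤ σ → τ ≤ n * h →
      ∀ z ∈ S τ, ∃ z' ∈ S 0, φ z' ≤ φ z + K * τ by
    obtain ⟨n, hn⟩ := exists_nat_ge (σ / h)
    exact H n σ hσ le_rfl ((div_le_iff₀ hh).1 hn) z hz
  intro n
  induction n with
  | zero =>
    intro τ hτ₀ _ hτ z hz
    obtain rfl : τ = 0 := by simp only [Nat.cast_zero, zero_mul] at hτ; linarith
    exact ⟨z, hz, by simp⟩
  | succ n ih =>
    intro τ hτ₀ hτσ hτn z hz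
    have hmax : τ - h ≤ max (τ - h) 0 := le_max_left _ _
    obtain ⟨z', hz', hzz'⟩ := hstep τ (max (τ - h) 0) (le_max_right _ _)
      (max_le (by linarith) hτ₀) hτσ (by linarith) z hz
    obtain ⟨z'', hz'', hz'z''⟩ := ih (max (τ - h) 0) (le_max_right _ _)
      (max_le (by linarith) (by linarith)) (max_le (by push_cast at hτn; linarith)
        (by positivity)) z' hz'
    exact ⟨z'', hz'', by linarith⟩

section PenaltyGap

variable {E : Type*} {Y : Set E} {φ γ : E → ℝ}

/-! For fixed `x`, with `φ = f x ·` and `γ = g x ·`, these are the paper's `T(x, τ)`, `l(x, τ)`,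
`ψ(x)` and `ψ_σ(x)`. -/

def solutionSet (Y : Set E) (φ γ : E → ℝ) (τ : ℝ) : Set E :=
  {y ∈ Y | IsMinOn (fun z => τ * φ z + γ z) Y y}

noncomputable def penaltyValue (Y : Set E) (φ γ : E → ℝ) (τ : ℝ) : ℝ :=
  sInf ((fun y => τ * φ y + γ y) '' Y)

noncomputable def hyperObjective (Y : Set E) (φ γ : E → ℝ) : ℝ :=
  sInf (φ '' solutionSet Y φ γ 0)

noncomputable def penalizedHyperObjective (Y : Set E) (φ γ : E → ℝ) (σ : ℝ) : ℝ :=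
  (penaltyValue Y φ γ σ - penaltyValue Y φ γ 0) / σ

theorem penaltyValue_eq_of_mem_solutionSet {τ : ℝ} {w : E} (hw : w ∈ solutionSet Y φ γ τ) :
    penaltyValue Y φ γ τ = τ * φ w + γ w :=
  IsLeast.csInf_eq ⟨mem_image_of_mem _ hw.1, forall_mem_image.2 hw.2⟩

theorem mul_le_penaltyValue_sub_le {σ : ℝ} {y w : E} (hy : y ∈ solutionSet Y φ γ σ)
    (hw : w ∈ solutionSet Y φ γ 0) :
    σ * φ y ≤ penaltyValue Y φ γ σ - penaltyValue Y φ γ 0 ∧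
      penaltyValue Y φ γ σ - penaltyValue Y φ γ 0 ≤ σ * φ w := by
  have hyw : σ * φ y + γ y ≤ σ * φ w + γ w := hy.2 hw.1
  have hwy : 0 * φ w + γ w ≤ 0 * φ y + γ y := hw.2 hy.1
  rw [penaltyValue_eq_of_mem_solutionSet hy, penaltyValue_eq_of_mem_solutionSet hw]
  constructor <;> linarith

variable [NormedAddCommGroup E]

def IsProxMap (Y : Set E) (φ γ : E → ℝ) (ρ σ₀ : ℝ) (prox : ℝ → E → E) : Prop :=
  ∀ τ ∈ Icc 0 σ₀, ∀ y, prox τ y ∈ Y ∧ ∀ z ∈ Y,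
    ρ * (τ * φ (prox τ y) + γ (prox τ y)) + ‖prox τ y - y‖ ^ 2 / 2
      ≤ ρ * (τ * φ z + γ z) + ‖z - y‖ ^ 2 / 2

def ProxErrorBound (Y : Set E) (φ γ : E → ℝ) (ρ σ₀ : ℝ) (prox : ℝ → E → E) (μ δ : ℝ) :
    Prop :=
  ∀ τ ∈ Icc 0 σ₀, ∀ y ∈ Y, ρ⁻¹ * ‖y - prox τ y‖ ≤ δ →
    μ * infDist y (solutionSet Y φ γ τ) ≤ ρ⁻¹ * ‖y - prox τ y‖

theorem solutionSet_nonempty (hY : IsCompact Y) (hYne : Y.Nonempty) (hφ : ContinuousOn φ Y)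
    (hγ : ContinuousOn γ Y) (τ : ℝ) : (solutionSet Y φ γ τ).Nonempty :=
  hY.exists_isMinOn hYne ((continuousOn_const.mul hφ).add hγ)

theorem isCompact_solutionSet (hY : IsCompact Y) (hφ : ContinuousOn φ Y)
    (hγ : ContinuousOn γ Y) (τ : ℝ) : IsCompact (solutionSet Y φ γ τ) := by
  rcases (solutionSet Y φ γ τ).eq_empty_or_nonempty with h | ⟨w, hwY, hw⟩
  · exact h ▸ isCompact_empty
  · have hcont : ContinuousOn (fun z => τ * φ z + γ z) Y := (continuousOn_const.mul hφ).add hγ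
    have heq : solutionSet Y φ γ τ = Y ∩ (fun z => τ * φ z + γ z) ⁻¹' Iic (τ * φ w + γ w) := by
      ext y
      exact ⟨fun hy => ⟨hy.1, hy.2 hwY⟩,
        fun hy => ⟨hy.1, isMinOn_iff.2 fun z hz => (mem_Iic.1 hy.2).trans (hw hz)⟩⟩
    rw [heq]
    exact hY.of_isClosed_subset (hcont.preimage_isClosed_of_isClosed hY.isClosed isClosed_Iic)
      inter_subset_left

theorem norm_sub_le_of_mem_solutionSet {ρ τ τ' L : ℝ} {z p : E} (hρ : 0 < ρ) (hτ : τ' ≤ τ)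
    (hL : 0 ≤ L) (hlip : ∀ a ∈ Y, ∀ b ∈ Y, |φ a - φ b| ≤ L * ‖a - b‖)
    (hz : z ∈ solutionSet Y φ γ τ) (hp : p ∈ Y)
    (hprox : ρ * (τ' * φ p + γ p) + ‖p - z‖ ^ 2 / 2 ≤ ρ * (τ' * φ z + γ z)) :
    ‖p - z‖ ≤ 2 * ρ * (τ - τ') * L := by
  have hmin : τ * φ z + γ z ≤ τ * φ p + γ p := hz.2 hp
  have hc : 0 ≤ ρ * (τ - τ') := mul_nonneg hρ.le (sub_nonneg.2 hτ)
  have hφ : ρ * (τ - τ') * (φ p - φ z) ≤ ρ * (τ - τ') * (L * ‖p - z‖) :=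
    mul_le_mul_of_nonneg_left (abs_le.1 (hlip p hp z hz.1)).2 hc
  have hsq : ‖p - z‖ ^ 2 ≤ (2 * ρ * (τ - τ') * L) * ‖p - z‖ := by nlinarith
  rcases (norm_nonneg (p - z)).eq_or_lt with h | h
  · rw [← h]; positivity
  · exact le_of_mul_le_mul_right (by nlinarith) h

variable {ρ σ₀ μ δ L : ℝ} {prox : ℝ → E → E}

theorem exists_mem_solutionSet_le_add_of_proxErrorBound (hY : IsCompact Y)
    (hφ : ContinuousOn φ Y) (hγ : ContinuousOn γ Y) (hL : 0 ≤ L)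
    (hlip : ∀ a ∈ Y, ∀ b ∈ Y, |φ a - φ b| ≤ L * ‖a - b‖) (hρ : 0 < ρ) (hμ : 0 < μ)
    (hprox : IsProxMap Y φ γ ρ σ₀ prox) (hEB : ProxErrorBound Y φ γ ρ σ₀ prox μ δ)
    {τ τ' : ℝ} (hτ' : 0 ≤ τ') (hτ'τ : τ' ≤ τ) (hτ : τ ≤ σ₀) (hδ : 2 * (τ - τ') * L ≤ δ)
    {z : E} (hz : z ∈ solutionSet Y φ γ τ) :
    ∃ z' ∈ solutionSet Y φ γ τ', φ z' ≤ φ z + 2 * (L ^ 2 / μ) * (τ - τ') := by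
  have hτ'mem : τ' ∈ Icc 0 σ₀ := ⟨hτ', hτ'τ.trans hτ⟩
  obtain ⟨hpY, hpmin⟩ := hprox τ' hτ'mem z
  have hres : ρ⁻¹ * ‖z - prox τ' z‖ ≤ 2 * (τ - τ') * L := by
    have := norm_sub_le_of_mem_solutionSet hρ hτ'τ hL hlip hz hpY (by simpa using hpmin z hz.1)
    rw [norm_sub_rev, inv_mul_le_iff₀ hρ]
    linarith
  have hdist : μ * infDist z (solutionSet Y φ γ τ') ≤ 2 * (τ - τ') * L :=
    (hEB τ' hτ'mem z hz.1 (hres.trans hδ)).trans hres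
  obtain ⟨z', hz', hzz'⟩ := (isCompact_solutionSet hY hφ hγ τ').exists_infDist_eq_dist
    (solutionSet_nonempty hY ⟨z, hz.1⟩ hφ hγ τ') z
  have hnorm : ‖z' - z‖ ≤ 2 * (τ - τ') * L / μ := by
    rw [← dist_eq_norm, dist_comm, ← hzz', le_div_iff₀ hμ, mul_comm]
    exact hdist
  have hφz' : φ z' - φ z ≤ L * ‖z' - z‖ := (abs_le.1 (hlip z' hz'.1 z hz.1)).2
  refine ⟨z', hz', ?_⟩
  calc φ z' ≤ φ z + L * (2 * (τ - τ') * L / μ) := by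
        nlinarith [mul_le_mul_of_nonneg_left hnorm hL]
    _ = φ z + 2 * (L ^ 2 / μ) * (τ - τ') := by ring

theorem penalizedHyperObjective_le_hyperObjective (hY : IsCompact Y) (hYne : Y.Nonempty)
    (hφ : ContinuousOn φ Y) (hγ : ContinuousOn γ Y) {σ : ℝ} (hσ : 0 < σ) :
    penalizedHyperObjective Y φ γ σ ≤ hyperObjective Y φ γ := by
  obtain ⟨y, hy⟩ := solutionSet_nonempty hY hYne hφ hγ σ
  refine le_csInf ((solutionSet_nonempty hY hYne hφ hγ 0).image φ) ?_
  rintro _ ⟨w, hw, rfl⟩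
  rw [penalizedHyperObjective, div_le_iff₀ hσ, mul_comm]
  exact (mul_le_penaltyValue_sub_le hy hw).2

theorem hyperObjective_sub_penalizedHyperObjective_le (hY : IsCompact Y) (hYne : Y.Nonempty)
    (hφ : ContinuousOn φ Y) (hγ : ContinuousOn γ Y) (hL : 0 ≤ L)
    (hlip : ∀ a ∈ Y, ∀ b ∈ Y, |φ a - φ b| ≤ L * ‖a - b‖) (hρ : 0 < ρ) (hμ : 0 < μ)
    (hδ : 0 < δ) (hprox : IsProxMap Y φ γ ρ σ₀ prox) (hEB : ProxErrorBound Y φ γ ρ σ₀ prox μ δ)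
    {σ : ℝ} (hσ : 0 < σ) (hσ₀ : σ ≤ σ₀) :
    hyperObjective Y φ γ - penalizedHyperObjective Y φ γ σ ≤ 2 * (L ^ 2 / μ) * σ := by
  obtain ⟨y, hy⟩ := solutionSet_nonempty hY hYne hφ hγ σ
  obtain ⟨w₀, hw₀⟩ := solutionSet_nonempty hY hYne hφ hγ 0
  obtain ⟨h, hh, hhδ⟩ := exists_pos_mul_lt hδ (2 * L)
  obtain ⟨z, hz, hφz⟩ := exists_mem_le_add_mul_of_forall_step (K := 2 * (L ^ 2 / μ)) hh hσ.le
    (fun τ τ' hτ' hτ'τ hτσ hτh _ hz => exists_mem_solutionSet_le_add_of_proxErrorBound hY hφ hγ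
      hL hlip hρ hμ hprox hEB hτ' hτ'τ (hτσ.trans hσ₀)
      (by nlinarith [mul_le_mul_of_nonneg_left hτh (by positivity : (0 : ℝ) ≤ 2 * L)]) hz)
    hy
  have hψ : hyperObjective Y φ γ ≤ φ z :=
    csInf_le ((isCompact_solutionSet hY hφ hγ 0).bddBelow_image (hφ.mono fun _ h => h.1))
      (mem_image_of_mem φ hz)
  have hψσ : φ y ≤ penalizedHyperObjective Y φ γ σ := by
    rw [penalizedHyperObjective, le_div_iff₀ hσ, mul_comm]
    exact (mul_le_penaltyValue_sub_le hy hw₀).1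
  linarith

end PenaltyGap

/-- Under prox-EB with parameters `μ, δ, σ₀ > 0`, there is a universal
constant `C > 0` (independent of all problem data) such that for every `x ∈ X` and every
`σ ∈ (0, min(σ₀, δ/(2 C_f))]`, one has `0 ≤ ψ(x) − ψ_σ(x) ≤ C (l_{f,0}²/μ) σ`; in particular
`ψ_σ(x) ≤ ψ(x)`. -/
theorem stmt1 :
    ∃ C : ℝ, 0 < C ∧
    ∀ (dx dy : ℕ)
      (X : Set (EuclideanSpace ℝ (Fin dx)))
      (Y : Set (EuclideanSpace ℝ (Fin dy)))
      (f g : EuclideanSpace ℝ (Fin dx) → EuclideanSpace ℝ (Fin dy) → ℝ)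
      (lf0 lf1 lg1 Cf μ δ σ₀ ρ : ℝ)
      (prox : EuclideanSpace ℝ (Fin dx) → ℝ → EuclideanSpace ℝ (Fin dy) →
        EuclideanSpace ℝ (Fin dy))
      (T : EuclideanSpace ℝ (Fin dx) → ℝ → Set (EuclideanSpace ℝ (Fin dy)))
      (l : EuclideanSpace ℝ (Fin dx) → ℝ → ℝ)
      (ψ : EuclideanSpace ℝ (Fin dx) → ℝ)
      (hXne : X.Nonempty) (hXclosed : IsClosed X) (hXconv : Convex ℝ X)
      (hYne : Y.Nonempty) (hYclosed : IsClosed Y) (hYconv : Convex ℝ Y)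
      (hYbdd : Bornology.IsBounded Y)
      (hfC2 : ContDiff ℝ 2 (Function.uncurry f))
      (hgC2 : ContDiff ℝ 2 (Function.uncurry g))
      (hLipf : ∀ p q : EuclideanSpace ℝ (Fin dx) × EuclideanSpace ℝ (Fin dy),
        ‖fderiv ℝ (Function.uncurry f) p - fderiv ℝ (Function.uncurry f) q‖ ≤ lf1 * ‖p - q‖)
      (hLipg : ∀ p q : EuclideanSpace ℝ (Fin dx) × EuclideanSpace ℝ (Fin dy),
        ‖fderiv ℝ (Function.uncurry g) p - fderiv ℝ (Function.uncurry g) q‖ ≤ lg1 * ‖p - q‖)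
      (hlf0 : ∀ x ∈ X, ∀ y ∈ Y, ‖gradient (fun y' => f x y') y‖ ≤ lf0)
      -- `C_f` is the supremum of `|f|` over `X × Y`
      (hCf : IsLUB ((fun p : EuclideanSpace ℝ (Fin dx) × EuclideanSpace ℝ (Fin dy) =>
        |f p.1 p.2|) '' (X ×ˢ Y)) Cf)
      (hμ : 0 < μ) (hδ : 0 < δ) (hσ₀ : 0 < σ₀)
      (hρpos : 0 < ρ) (hρ : ρ ≤ 1 / (8 * lg1)) (hσ₀l : σ₀ * lf1 ≤ lg1)
      -- `prox x σ y` is the unique minimizer over `z ∈ Y` of `ρ h_σ(x,z) + ‖z − y‖²/2`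
      (hprox : ∀ x (σ : ℝ), σ ∈ Icc 0 σ₀ → ∀ y, prox x σ y ∈ Y ∧ ∀ z ∈ Y,
        ρ * (σ * f x (prox x σ y) + g x (prox x σ y)) + ‖prox x σ y - y‖ ^ 2 / 2
          ≤ ρ * (σ * f x z + g x z) + ‖z - y‖ ^ 2 / 2)
      -- the lower-level solution set `T(x,σ)`
      (hT : ∀ x σ, T x σ = {y ∈ Y | ∀ z ∈ Y, σ * f x y + g x y ≤ σ * f x z + g x z})
      -- prox-EB
      (hEB : ∀ x ∈ X, ∀ σ ∈ Icc (0:ℝ) σ₀, ∀ y ∈ Y,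
        ρ⁻¹ * ‖y - prox x σ y‖ ≤ δ →
          μ * infDist y (T x σ) ≤ ρ⁻¹ * ‖y - prox x σ y‖)
      -- value function and hyper-objective
      (hl : ∀ x σ, l x σ = sInf ((fun y => σ * f x y + g x y) '' Y))
      (hψ : ∀ x, ψ x = sInf ((fun y => f x y) '' T x 0)),
      ∀ x ∈ X, ∀ σ : ℝ, 0 < σ → σ ≤ min σ₀ (δ / (2 * Cf)) →
        (l x σ - l x 0) / σ ≤ ψ x ∧
        ψ x - (l x σ - l x 0) / σ ≤ C * (lf0 ^ 2 / μ) * σ := by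
  refine ⟨2, two_pos, ?_⟩
  intro _ _ X Y f g lf0 _ _ _ μ δ σ₀ ρ prox T l ψ _ _ _ hYne hYclosed hYconv hYbdd hfC2 hgC2
    _ _ hlf0 _ hμ hδ _ hρ _ _ hprox hT hEB hl hψ x hx σ hσ hσle
  have hTx : T x = solutionSet Y (f x) (g x) := funext (hT x)
  have hYcpt : IsCompact Y := isCompact_of_isClosed_isBounded hYclosed hYbdd
  have hfx : Differentiable ℝ (f x) :=
    (hfC2.differentiable (by norm_num)).comp ((differentiable_const x).prodMk differentiable_id)
  have hfx' : ContinuousOn (f x) Y := hfx.continuous.continuousOn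
  have hgx : ContinuousOn (g x) Y :=
    (hgC2.continuous.comp (Continuous.prodMk_right x)).continuousOn
  have hlip := abs_sub_le_of_norm_gradient_le hYconv (fun y _ => hfx y) (hlf0 x hx)
  have hL : 0 ≤ lf0 := (norm_nonneg _).trans (hlf0 x hx _ hYne.some_mem)
  have hEBx : ProxErrorBound Y (f x) (g x) ρ σ₀ (prox x) μ δ := fun τ hτ y hy => 
    hTx ▸ hEB x hx τ hτ y hy
  rw [hψ, hl, hl, hTx]
  exact ⟨penalizedHyperObjective_le_hyperObjective hYcpt hYne hfx' hgx hσ,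
    hyperObjective_sub_penalizedHyperObjective_le hYcpt hYne hfx' hgx hL hlip hρ hμ hδ (hprox x)
      hEBx hσ (hσle.trans (min_le_left _ _))⟩
end

section
/- Suppose prox-EB holds with parameters μ, δ, σ₀ > 0. Then the solution-set map T is Lipschitz continuous in Hausdorff distance jointly in (x,σ): there is a universal constant C > 0 (independent of all problem data) such that for all x₁, x₂ ∈ X and all σ₁, σ₂ ∈ [0, min(σ₀, δ/C_f)], dist(T(x₁,σ₁), T(x₂,σ₂)) ≤ (C/μ)·(l_{g,1} ‖x₁ − x₂‖ + l_{f,0} |σ₁ − σ₂|). In particular, T(·,σ) is (C l_{g,1}/μ)-Lipschitz in x and T(x,·) is (C l_{f,0}/μ)-Lipschitz in σ on this range. -/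
/-!
Fix `y ∈ T(x,σ)` and take one proximal step `z = prox_{ρ h_{σ'}(x',·)}(y)`. Adding the
variational inequalities of the two minimization problems at `y` and at `z` bounds `‖y - z‖` by
`ρ` times the gap between the two partial gradients, and the Lipschitz bounds together with
`ρ ≤ 1/(8 l_{g,1})` turn this into `ρ⁻¹‖y - z‖ ≤ (4/3)(2 l_{g,1}‖x - x'‖ + l_{f,0}|σ - σ'|)`.
When this residual is at most `δ`, prox-EB converts it into a bound on `dist(y, T(x',σ'))`, so `T`
is Lipschitz with constant `4/(3μ)` on pairs of nearby parameters. Cutting the segment between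
`(x₁,σ₁)` and `(x₂,σ₂)` into short pieces and using the triangle inequality for the Hausdorff
distance (all `T(x,σ)` are nonempty and bounded since `Y` is compact) gives the global bound with
`C = 8/3`.
-/

open Set Metric

theorem IsMinOn.hasFDerivAt_apply_sub_nonneg {F : Type*} [NormedAddCommGroup F] [NormedSpace ℝ F]
    {φ : F → ℝ} {φ' : F →L[ℝ] ℝ} {Y : Set F} {y z : F} (hmin : IsMinOn φ Y y)
    (hφ : HasFDerivAt φ φ' y) (hY : Convex ℝ Y) (hy : y ∈ Y) (hz : z ∈ Y) : 0 ≤ φ' (z - y) :=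
  hmin.localize.hasFDerivWithinAt_nonneg hφ.hasFDerivWithinAt
    (sub_mem_posTangentConeAt_of_segment_subset (hY.segment_subset hy hz))

theorem hasFDerivAt_norm_sub_sq_div_two {F : Type*} [NormedAddCommGroup F] [InnerProductSpace ℝ F]
    (y z : F) : HasFDerivAt (fun w => ‖w - y‖ ^ 2 / 2) (innerSL ℝ (z - y)) z := by
  have h := ((hasFDerivAt_id z).sub_const y).norm_sq.const_mul (2⁻¹ : ℝ)
  refine (h.congr_fderiv ?_).congr_of_eventuallyEq (.of_forall fun w => ?_)
  · ext v; simp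
  · simp only [id]; ring

/-- Adding the variational inequalities at `y` and `z` gives `‖y - z‖² ≤ ρ (B - A) (y - z)`. -/
theorem norm_sub_prox_le {F : Type*} [NormedAddCommGroup F] [InnerProductSpace ℝ F]
    {Y : Set F} (hY : Convex ℝ Y) {h₁ h₂ : F → ℝ} {A B : F →L[ℝ] ℝ} {ρ : ℝ} (hρ : 0 ≤ ρ)
    {y z : F} (hy : y ∈ Y) (hz : z ∈ Y) (hA : HasFDerivAt h₁ A y) (hB : HasFDerivAt h₂ B z)
    (hymin : IsMinOn h₁ Y y) (hzmin : IsMinOn (fun w => ρ * h₂ w + ‖w - y‖ ^ 2 / 2) Y z) :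
    ‖y - z‖ ≤ ρ * ‖B - A‖ := by
  have hAy : 0 ≤ A (z - y) := hymin.hasFDerivAt_apply_sub_nonneg hA hY hy hz
  have hBz := hzmin.hasFDerivAt_apply_sub_nonneg
      ((hB.const_mul ρ).add (hasFDerivAt_norm_sub_sq_div_two y z)) hY hz hy
  simp only [FunLike.coe_add, FunLike.coe_smul, Pi.add_apply,
    Pi.smul_apply, smul_eq_mul, innerSL_apply_apply] at hBz
  have hgap : B (y - z) - A (y - z) ≤ ‖B - A‖ * ‖y - z‖ :=
    (le_abs_self _).trans ((B - A).le_opNorm _)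
  have key : ‖y - z‖ ^ 2 ≤ ρ * ‖B - A‖ * ‖y - z‖ := by
    rw [← neg_sub y z, inner_neg_left, real_inner_self_eq_norm_sq, map_neg] at *
    nlinarith
  rcases (norm_nonneg (y - z)).eq_or_lt with h0 | hpos
  · rw [← h0]; positivity
  · nlinarith

section PartialDerivative

variable {E F : Type*} [NormedAddCommGroup E] [NormedSpace ℝ E] [NormedAddCommGroup F]
  [NormedSpace ℝ F] {f : E → F → ℝ}

theorem hasFDerivAt_comp_inr_of_uncurry {x : E} {z : F}
    (hf : DifferentiableAt ℝ (Function.uncurry f) (x, z)) :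
    HasFDerivAt (f x) ((fderiv ℝ (Function.uncurry f) (x, z)).comp
      (ContinuousLinearMap.inr ℝ E F)) z :=
  hf.hasFDerivAt.comp z (hasFDerivAt_prodMk_right x z)

theorem norm_comp_inr_sub_comp_inr_le (A B : E × F →L[ℝ] ℝ) :
    ‖A.comp (ContinuousLinearMap.inr ℝ E F) - B.comp (ContinuousLinearMap.inr ℝ E F)‖ ≤
      ‖A - B‖ := by
  rw [← ContinuousLinearMap.sub_comp]
  exact (ContinuousLinearMap.opNorm_comp_le _ _).trans
    (mul_le_of_le_one_right (norm_nonneg _) (ContinuousLinearMap.norm_inr_le_one ℝ E F))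

end PartialDerivative

theorem norm_smul_add_sub_smul_add_le {G : Type*} [SeminormedAddCommGroup G] [NormedSpace ℝ G]
    {σ σ' : ℝ} (hσ' : 0 ≤ σ') (a a' b b' : G) :
    ‖(σ' • a' + b') - (σ • a + b)‖ ≤ σ' * ‖a' - a‖ + |σ' - σ| * ‖a‖ + ‖b' - b‖ := by
  calc ‖(σ' • a' + b') - (σ • a + b)‖ = ‖σ' • (a' - a) + (σ' - σ) • a + (b' - b)‖ := by
        congr 1; module
    _ ≤ ‖σ' • (a' - a)‖ + ‖(σ' - σ) • a‖ + ‖b' - b‖ := norm_add₃_le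
    _ = σ' * ‖a' - a‖ + |σ' - σ| * ‖a‖ + ‖b' - b‖ := by
        rw [norm_smul, norm_smul, Real.norm_of_nonneg hσ', Real.norm_eq_abs]

/-- Cut the segment from `q` to `p` into `n + 1` pieces of cost at most `δ`. -/
theorem Convex.hausdorffDist_le_of_small_steps {E α : Type*} [NormedAddCommGroup E]
    [NormedSpace ℝ E] [PseudoMetricSpace α] {P : Set E} (hP : Convex ℝ P) {S : E → Set α}
    (hne : ∀ p ∈ P, (S p).Nonempty) (hbdd : ∀ p ∈ P, Bornology.IsBounded (S p))
    {N : E → ℝ} (hN : ∀ (t : ℝ) v, N (t • v) = |t| * N v) {δ K : ℝ} (hδ : 0 < δ)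
    (hloc : ∀ p ∈ P, ∀ q ∈ P, N (p - q) ≤ δ → hausdorffDist (S p) (S q) ≤ K * N (p - q))
    {p q : E} (hp : p ∈ P) (hq : q ∈ P) : hausdorffDist (S p) (S q) ≤ K * N (p - q) := by
  obtain ⟨n, hn⟩ := exists_nat_gt (N (p - q) / δ)
  set m : ℝ := n + 1 with hm
  have hm0 : 0 < m := by positivity
  set r : ℕ → E := fun k => q + (k / m : ℝ) • (p - q)
  have hr : ∀ k : ℕ, k ≤ n + 1 → r k ∈ P := fun k hk =>
    hP.add_smul_sub_mem hq hp ⟨by positivity, (div_le_one hm0).2 (by rw [hm]; exact_mod_cast hk)⟩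
  have hstep : ∀ k, N (r (k + 1) - r k) = N (p - q) / m := fun k => by
    rw [show r (k + 1) - r k = (1 / m) • (p - q) by simp only [r]; push_cast; module, hN,
      abs_of_pos (by positivity)]
    ring
  have hsmall : N (p - q) / m ≤ δ := by
    rw [div_le_iff₀ hm0]
    rw [div_lt_iff₀ hδ] at hn
    nlinarith
  have hchain : ∀ k : ℕ, k ≤ n + 1 → hausdorffDist (S (r k)) (S q) ≤ K * N (p - q) * (k / m) := by
    intro k
    induction k with
    | zero => intro; simp [r, hausdorffDist_self_zero]
    | succ k ih =>
      intro hk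
      have hk' : k ≤ n + 1 := by omega
      calc hausdorffDist (S (r (k + 1))) (S q)
          ≤ hausdorffDist (S (r (k + 1))) (S (r k)) + hausdorffDist (S (r k)) (S q) :=
            hausdorffDist_triangle (hausdorffEDist_ne_top_of_nonempty_of_bounded
              (hne _ (hr _ hk)) (hne _ (hr _ hk')) (hbdd _ (hr _ hk)) (hbdd _ (hr _ hk')))
        _ ≤ K * (N (p - q) / m) + K * N (p - q) * (k / m) := by
            gcongr
            · rw [← hstep]; exact hloc _ (hr _ hk) _ (hr _ hk') (by rw [hstep]; exact hsmall)
            · exact ih hk'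
        _ = K * N (p - q) * ((k + 1 : ℕ) / m) := by push_cast; ring
  have hcast : ((n + 1 : ℕ) : ℝ) / m = 1 := by rw [Nat.cast_succ, div_self hm0.ne']
  have hrm : r (n + 1) = p := by simp only [r, hcast, one_smul, add_sub_cancel]
  simpa only [hrm, hcast, mul_one] using hchain (n + 1) le_rfl

section ProxErrorBound

variable {E F : Type*} [NormedAddCommGroup E] [NormedSpace ℝ E] [NormedAddCommGroup F]
  [InnerProductSpace ℝ F] {X : Set E} {Y : Set F} {f g : E → F → ℝ} {lf0 lf1 lg1 μ δ σ₀ ρ : ℝ}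

/-- The factor `4/3 = 1/(1 - 1/4)` comes from absorbing `2 ρ l_{g,1} ‖y - z‖ ≤ ‖y - z‖ / 4`. -/
theorem norm_sub_prox_le_of_lipschitz_fderiv (hY : Convex ℝ Y)
    (hf : Differentiable ℝ (Function.uncurry f)) (hg : Differentiable ℝ (Function.uncurry g))
    (hLf : ∀ p q, ‖fderiv ℝ (Function.uncurry f) p - fderiv ℝ (Function.uncurry f) q‖ ≤
      lf1 * ‖p - q‖)
    (hLg : ∀ p q, ‖fderiv ℝ (Function.uncurry g) p - fderiv ℝ (Function.uncurry g) q‖ ≤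
      lg1 * ‖p - q‖)
    (hlg1 : 0 ≤ lg1) (hρ : 0 ≤ ρ) (hρg : 8 * ρ * lg1 ≤ 1) {x x' : E} {σ σ' : ℝ} (hσ' : 0 ≤ σ')
    (hσ'f : σ' * lf1 ≤ lg1) {y z : F} (hfy : ‖fderiv ℝ (f x) y‖ ≤ lf0) (hy : y ∈ Y)
    (hymin : IsMinOn (fun w => σ * f x w + g x w) Y y) (hz : z ∈ Y)
    (hzmin : IsMinOn (fun w => ρ * (σ' * f x' w + g x' w) + ‖w - y‖ ^ 2 / 2) Y z) :
    3 * ‖y - z‖ ≤ 4 * ρ * (2 * lg1 * ‖x - x'‖ + lf0 * |σ - σ'|) := by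
  set Df := fun p => (fderiv ℝ (Function.uncurry f) p).comp (ContinuousLinearMap.inr ℝ E F)
  set Dg := fun p => (fderiv ℝ (Function.uncurry g) p).comp (ContinuousLinearMap.inr ℝ E F)
  have hDf : ∀ x z, HasFDerivAt (f x) (Df (x, z)) z := fun x z =>
    hasFDerivAt_comp_inr_of_uncurry (hf _)
  have hDg : ∀ x z, HasFDerivAt (g x) (Dg (x, z)) z := fun x z =>
    hasFDerivAt_comp_inr_of_uncurry (hg _)
  have hprox := norm_sub_prox_le hY hρ hy hz
    (((hDf x y).const_mul σ).add (hDg x y)) (((hDf x' z).const_mul σ').add (hDg x' z)) hymin hzmin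
  have hdist : ‖(x', z) - (x, y)‖ ≤ ‖x - x'‖ + ‖y - z‖ := by
    rw [Prod.mk_sub_mk, Prod.norm_def, norm_sub_rev x', norm_sub_rev z]
    exact max_le_add_of_nonneg (norm_nonneg _) (norm_nonneg _)
  have hgap : ‖(σ' • Df (x', z) + Dg (x', z)) - (σ • Df (x, y) + Dg (x, y))‖ ≤
      2 * lg1 * (‖x - x'‖ + ‖y - z‖) + lf0 * |σ - σ'| := by
    calc _ ≤ σ' * ‖Df (x', z) - Df (x, y)‖ + |σ' - σ| * ‖Df (x, y)‖ + ‖Dg (x', z) - Dg (x, y)‖ :=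
          norm_smul_add_sub_smul_add_le hσ' _ _ _ _
      _ ≤ σ' * (lf1 * ‖(x', z) - (x, y)‖) + |σ' - σ| * lf0 + lg1 * ‖(x', z) - (x, y)‖ := by
          gcongr
          · exact (norm_comp_inr_sub_comp_inr_le _ _).trans (hLf _ _)
          · rwa [← (hDf x y).fderiv]
          · exact (norm_comp_inr_sub_comp_inr_le _ _).trans (hLg _ _)
      _ ≤ 2 * lg1 * (‖x - x'‖ + ‖y - z‖) + lf0 * |σ - σ'| := by
          rw [abs_sub_comm]
          nlinarith [norm_nonneg ((x', z) - (x, y))]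
  nlinarith [norm_nonneg (y - z), norm_nonneg (x - x')]

theorem hausdorffDist_le_of_proxEB (hY : Convex ℝ Y)
    (hf : Differentiable ℝ (Function.uncurry f)) (hg : Differentiable ℝ (Function.uncurry g))
    (hLf : ∀ p q, ‖fderiv ℝ (Function.uncurry f) p - fderiv ℝ (Function.uncurry f) q‖ ≤
      lf1 * ‖p - q‖)
    (hLg : ∀ p q, ‖fderiv ℝ (Function.uncurry g) p - fderiv ℝ (Function.uncurry g) q‖ ≤
      lg1 * ‖p - q‖)
    (hf0 : ∀ x ∈ X, ∀ y ∈ Y, ‖fderiv ℝ (f x) y‖ ≤ lf0) (hlf0 : 0 ≤ lf0) (hlg1 : 0 ≤ lg1)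
    (hμ : 0 < μ) (hρ : 0 < ρ) (hρg : 8 * ρ * lg1 ≤ 1) (hσ₀l : σ₀ * lf1 ≤ lg1)
    {prox : E → ℝ → F → F} {T : E → ℝ → Set F}
    (hprox : ∀ x (σ : ℝ), σ ∈ Icc 0 σ₀ → ∀ y, prox x σ y ∈ Y ∧ ∀ z ∈ Y,
      ρ * (σ * f x (prox x σ y) + g x (prox x σ y)) + ‖prox x σ y - y‖ ^ 2 / 2
        ≤ ρ * (σ * f x z + g x z) + ‖z - y‖ ^ 2 / 2)
    (hT : ∀ x σ, T x σ = {y ∈ Y | ∀ z ∈ Y, σ * f x y + g x y ≤ σ * f x z + g x z})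
    (hEB : ∀ x ∈ X, ∀ σ ∈ Icc (0:ℝ) σ₀, ∀ y ∈ Y,
      ρ⁻¹ * ‖y - prox x σ y‖ ≤ δ → μ * infDist y (T x σ) ≤ ρ⁻¹ * ‖y - prox x σ y‖)
    {x x' : E} (hx : x ∈ X) (hx' : x' ∈ X) {σ σ' : ℝ} (hσ : σ ∈ Icc 0 σ₀) (hσ' : σ' ∈ Icc 0 σ₀)
    (hsmall : 2 * lg1 * ‖x - x'‖ + lf0 * |σ - σ'| ≤ 3 / 4 * δ) :
    hausdorffDist (T x σ) (T x' σ') ≤ 4 / (3 * μ) * (2 * lg1 * ‖x - x'‖ + lf0 * |σ - σ'|) := by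
  have hinf : ∀ x ∈ X, ∀ x' ∈ X, ∀ σ ∈ Icc 0 σ₀, ∀ σ' ∈ Icc 0 σ₀,
      2 * lg1 * ‖x - x'‖ + lf0 * |σ - σ'| ≤ 3 / 4 * δ → ∀ y ∈ T x σ,
      infDist y (T x' σ') ≤ 4 / (3 * μ) * (2 * lg1 * ‖x - x'‖ + lf0 * |σ - σ'|) := by
    intro x hx x' hx' σ hσ σ' hσ' hsmall y hy
    rw [hT] at hy
    obtain ⟨hzY, hzmin⟩ := hprox x' σ' hσ' y
    have hσ'f : σ' * lf1 ≤ lg1 := by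
      rcases le_total 0 lf1 with h | h <;> nlinarith [hσ'.1, hσ'.2]
    have hres := norm_sub_prox_le_of_lipschitz_fderiv hY hf hg hLf hLg hlg1 hρ.le hρg hσ'.1 hσ'f
      (hf0 x hx y hy.1) hy.1 hy.2 hzY hzmin
    have hres' : ρ⁻¹ * ‖y - prox x' σ' y‖ ≤ 4 / 3 * (2 * lg1 * ‖x - x'‖ + lf0 * |σ - σ'|) := by
      rw [inv_mul_le_iff₀ hρ]; linarith
    have heb := hEB x' hx' σ' hσ' y hy.1 (hres'.trans (by linarith))
    rw [div_mul_eq_mul_div, le_div_iff₀ (by positivity)]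
    linarith
  refine hausdorffDist_le_of_infDist (by positivity) (hinf x hx x' hx' σ hσ σ' hσ' hsmall)
    fun y hy => ?_
  rw [norm_sub_rev, abs_sub_comm] at hsmall ⊢
  exact hinf x' hx' x hx σ' hσ' σ hσ hsmall y hy

end ProxErrorBound

/-- Under prox-EB with parameters `μ, δ, σ₀ > 0`, the solution-set map `T`
is jointly Lipschitz in Hausdorff distance: there is a universal constant `C > 0` such that
for all `x₁, x₂ ∈ X` and all `σ₁, σ₂ ∈ [0, min(σ₀, δ/C_f)]`,
`dist(T(x₁,σ₁), T(x₂,σ₂)) ≤ (C/μ)(l_{g,1}‖x₁−x₂‖ + l_{f,0}|σ₁−σ₂|)`. -/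
theorem stmt8 :
    ∃ C : ℝ, 0 < C ∧
    ∀ (dx dy : ℕ)
      (X : Set (EuclideanSpace ℝ (Fin dx)))
      (Y : Set (EuclideanSpace ℝ (Fin dy)))
      (f g : EuclideanSpace ℝ (Fin dx) → EuclideanSpace ℝ (Fin dy) → ℝ)
      (lf0 lf1 lg1 Cf μ δ σ₀ ρ : ℝ)
      (prox : EuclideanSpace ℝ (Fin dx) → ℝ → EuclideanSpace ℝ (Fin dy) →
        EuclideanSpace ℝ (Fin dy))
      (T : EuclideanSpace ℝ (Fin dx) → ℝ → Set (EuclideanSpace ℝ (Fin dy)))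
      (hXne : X.Nonempty) (hXclosed : IsClosed X) (hXconv : Convex ℝ X)
      (hYne : Y.Nonempty) (hYclosed : IsClosed Y) (hYconv : Convex ℝ Y)
      (hYbdd : Bornology.IsBounded Y)
      (hfC2 : ContDiff ℝ 2 (Function.uncurry f))
      (hgC2 : ContDiff ℝ 2 (Function.uncurry g))
      (hLipf : ∀ p q : EuclideanSpace ℝ (Fin dx) × EuclideanSpace ℝ (Fin dy),
        ‖fderiv ℝ (Function.uncurry f) p - fderiv ℝ (Function.uncurry f) q‖ ≤ lf1 * ‖p - q‖)
      (hLipg : ∀ p q : EuclideanSpace ℝ (Fin dx) × EuclideanSpace ℝ (Fin dy),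
        ‖fderiv ℝ (Function.uncurry g) p - fderiv ℝ (Function.uncurry g) q‖ ≤ lg1 * ‖p - q‖)
      (hlf0 : ∀ x ∈ X, ∀ y ∈ Y, ‖gradient (fun y' => f x y') y‖ ≤ lf0)
      -- `C_f` is the supremum of `|f|` over `X × Y`
      (hCf : IsLUB ((fun p : EuclideanSpace ℝ (Fin dx) × EuclideanSpace ℝ (Fin dy) =>
        |f p.1 p.2|) '' (X ×ˢ Y)) Cf)
      (hμ : 0 < μ) (hδ : 0 < δ) (hσ₀ : 0 < σ₀)
      (hρpos : 0 < ρ) (hρ : ρ ≤ 1 / (8 * lg1)) (hσ₀l : σ₀ * lf1 ≤ lg1)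
      -- `prox x σ y` is the unique minimizer over `z ∈ Y` of `ρ h_σ(x,z) + ‖z − y‖²/2`
      (hprox : ∀ x (σ : ℝ), σ ∈ Icc 0 σ₀ → ∀ y, prox x σ y ∈ Y ∧ ∀ z ∈ Y,
        ρ * (σ * f x (prox x σ y) + g x (prox x σ y)) + ‖prox x σ y - y‖ ^ 2 / 2
          ≤ ρ * (σ * f x z + g x z) + ‖z - y‖ ^ 2 / 2)
      -- the lower-level solution set `T(x,σ)`
      (hT : ∀ x σ, T x σ = {y ∈ Y | ∀ z ∈ Y, σ * f x y + g x y ≤ σ * f x z + g x z})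
      -- prox-EB
      (hEB : ∀ x ∈ X, ∀ σ ∈ Icc (0:ℝ) σ₀, ∀ y ∈ Y,
        ρ⁻¹ * ‖y - prox x σ y‖ ≤ δ →
          μ * infDist y (T x σ) ≤ ρ⁻¹ * ‖y - prox x σ y‖),
      ∀ x₁ ∈ X, ∀ x₂ ∈ X, ∀ σ₁ ∈ Icc (0:ℝ) (min σ₀ (δ / Cf)), ∀ σ₂ ∈ Icc (0:ℝ) (min σ₀ (δ / Cf)),
        hausdorffDist (T x₁ σ₁) (T x₂ σ₂) ≤ (C / μ) * (lg1 * ‖x₁ - x₂‖ + lf0 * |σ₁ - σ₂|) := by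
  refine ⟨8 / 3, by norm_num, ?_⟩
  intro dx dy X Y f g lf0 lf1 lg1 Cf μ δ σ₀ ρ prox T _ _ hXconv hYne hYclosed hYconv hYbdd hfC2 hgC2
    hLipf hLipg hlf0 _ hμ hδ _ hρpos hρ hσ₀l hprox hT hEB x₁ hx₁ x₂ hx₂ σ₁ hσ₁ σ₂ hσ₂
  have hlg1 : 0 < lg1 := by
    by_contra! h
    exact hρpos.not_ge (hρ.trans (div_nonpos_of_nonneg_of_nonpos zero_le_one (by linarith)))
  have hρg : 8 * ρ * lg1 ≤ 1 := by rw [le_div_iff₀ (by positivity)] at hρ; linarith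
  have hlf0nn : 0 ≤ lf0 := (norm_nonneg _).trans (hlf0 x₁ hx₁ _ hYne.some_mem)
  have hf := hfC2.differentiable (by norm_num)
  have hg := hgC2.differentiable (by norm_num)
  have hf0 : ∀ x ∈ X, ∀ y ∈ Y, ‖fderiv ℝ (f x) y‖ ≤ lf0 := fun x hx y hy => by
    simpa [gradient] using hlf0 x hx y hy
  have hTne : ∀ x σ, (T x σ).Nonempty := fun x σ => by
    obtain ⟨y, hy, hmin⟩ := (isCompact_of_isClosed_isBounded hYclosed hYbdd).exists_isMinOn hYne
      (fun w _ => (((hasFDerivAt_comp_inr_of_uncurry (hf _)).const_mul σ).add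
        (hasFDerivAt_comp_inr_of_uncurry (hg _))).continuousAt.continuousWithinAt)
    exact ⟨y, by rw [hT]; exact ⟨hy, hmin⟩⟩
  have hTY : ∀ x σ, T x σ ⊆ Y := fun x σ => by rw [hT]; exact sep_subset _ _
  have hpath := (hXconv.prod (convex_Icc 0 σ₀)).hausdorffDist_le_of_small_steps
    (S := fun p => T p.1 p.2) (fun p _ => hTne _ _) (fun p _ => hYbdd.subset (hTY _ _))
    (N := fun v => 2 * lg1 * ‖v.1‖ + lf0 * |v.2|) (fun t v => by
      simp only [Prod.smul_fst, Prod.smul_snd, norm_smul, smul_eq_mul, abs_mul, Real.norm_eq_abs]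
      ring)
    (δ := 3 / 4 * δ) (K := 4 / (3 * μ)) (by positivity)
    (fun p hp q hq hsmall => hausdorffDist_le_of_proxEB hYconv hf hg hLipf hLipg hf0 hlf0nn
      hlg1.le hμ hρpos hρg hσ₀l hprox hT hEB hp.1 hq.1 hp.2 hq.2 hsmall)
    (p := (x₁, σ₁)) (q := (x₂, σ₂)) ⟨hx₁, hσ₁.1, hσ₁.2.trans (min_le_left _ _)⟩
    ⟨hx₂, hσ₂.1, hσ₂.2.trans (min_le_left _ _)⟩
  refine hpath.trans ?_
  simp only [Prod.mk_sub_mk]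
  rw [div_mul_eq_mul_div, div_mul_eq_mul_div, div_le_div_iff₀ (by positivity) hμ]
  nlinarith [mul_nonneg hlf0nn (abs_nonneg (σ₁ - σ₂))]
end

section
/- Suppose prox-EB holds with parameters μ, δ, σ₀ > 0, and assume ‖y‖ ≤ D_Y for all y ∈ Y. Then for every x ∈ X, every y ∈ Y, and every σ ∈ [0, min(σ₀, δ/C_f)], the distance to the solution set is controlled by the proximal error without any smallness restriction: dist(y, T(x,σ)) ≤ (1/μ + 2 D_Y/δ) · ρ^{-1} ‖y − prox_{ρ h_σ(x,·)}(y)‖. -/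
open Set Metric

/-- Under proximal error-bound (prox-EB) with parameters `μ, δ, σ₀ > 0`
and `‖y‖ ≤ D_Y` on `Y`, for every `x ∈ X`, `y ∈ Y`, `σ ∈ [0, min(σ₀, δ/C_f)]`:
`dist(y, T(x,σ)) ≤ (1/μ + 2 D_Y/δ) · ρ⁻¹ ‖y − prox_{ρ h_σ(x,·)}(y)‖`. -/
theorem stmt9
    (dx dy : ℕ)
    (X : Set (EuclideanSpace ℝ (Fin dx)))
    (Y : Set (EuclideanSpace ℝ (Fin dy)))
    (hXne : X.Nonempty) (hXclosed : IsClosed X) (hXconv : Convex ℝ X)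
    (hYne : Y.Nonempty) (hYclosed : IsClosed Y) (hYconv : Convex ℝ Y)
    (hYbdd : Bornology.IsBounded Y)
    (f g : EuclideanSpace ℝ (Fin dx) → EuclideanSpace ℝ (Fin dy) → ℝ)
    (lf0 lf1 lg1 Cf DY μ δ σ₀ ρ : ℝ)
    (hfC2 : ContDiff ℝ 2 (Function.uncurry f))
    (hgC2 : ContDiff ℝ 2 (Function.uncurry g))
    (hLipf : ∀ p q : EuclideanSpace ℝ (Fin dx) × EuclideanSpace ℝ (Fin dy),
      ‖fderiv ℝ (Function.uncurry f) p - fderiv ℝ (Function.uncurry f) q‖ ≤ lf1 * ‖p - q‖)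
    (hLipg : ∀ p q : EuclideanSpace ℝ (Fin dx) × EuclideanSpace ℝ (Fin dy),
      ‖fderiv ℝ (Function.uncurry g) p - fderiv ℝ (Function.uncurry g) q‖ ≤ lg1 * ‖p - q‖)
    (hlf0 : ∀ x ∈ X, ∀ y ∈ Y, ‖gradient (fun y' => f x y') y‖ ≤ lf0)
    -- `C_f` is the supremum of `|f|` over `X × Y`
    (hCf : IsLUB ((fun p : EuclideanSpace ℝ (Fin dx) × EuclideanSpace ℝ (Fin dy) =>
      |f p.1 p.2|) '' (X ×ˢ Y)) Cf)
    -- `D_Y` bounds the norm on `Y`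
    (hDY : ∀ y ∈ Y, ‖y‖ ≤ DY)
    (hμ : 0 < μ) (hδ : 0 < δ) (hσ₀ : 0 < σ₀)
    (hρpos : 0 < ρ) (hρ : ρ ≤ 1 / (8 * lg1)) (hσ₀l : σ₀ * lf1 ≤ lg1)
    -- `prox x σ y` is the unique minimizer over `z ∈ Y` of `ρ h_σ(x,z) + ‖z − y‖²/2`
    (prox : EuclideanSpace ℝ (Fin dx) → ℝ → EuclideanSpace ℝ (Fin dy) → EuclideanSpace ℝ (Fin dy))
    (hprox : ∀ x (σ : ℝ), σ ∈ Icc 0 σ₀ → ∀ y, prox x σ y ∈ Y ∧ ∀ z ∈ Y,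
      ρ * (σ * f x (prox x σ y) + g x (prox x σ y)) + ‖prox x σ y - y‖ ^ 2 / 2
        ≤ ρ * (σ * f x z + g x z) + ‖z - y‖ ^ 2 / 2)
    -- the lower-level solution set `T(x,σ)`
    (T : EuclideanSpace ℝ (Fin dx) → ℝ → Set (EuclideanSpace ℝ (Fin dy)))
    (hT : ∀ x σ, T x σ = {y ∈ Y | ∀ z ∈ Y, σ * f x y + g x y ≤ σ * f x z + g x z})
    -- prox-EB
    (hEB : ∀ x ∈ X, ∀ σ ∈ Icc (0:ℝ) σ₀, ∀ y ∈ Y,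
      ρ⁻¹ * ‖y - prox x σ y‖ ≤ δ →
        μ * infDist y (T x σ) ≤ ρ⁻¹ * ‖y - prox x σ y‖) :
    ∀ x ∈ X, ∀ y ∈ Y, ∀ σ ∈ Icc (0:ℝ) (min σ₀ (δ / Cf)),
      infDist y (T x σ) ≤ (1 / μ + 2 * DY / δ) * (ρ⁻¹ * ‖y - prox x σ y‖) := by

  intro x hx y hy σ hσ
  have hσ' : σ ∈ Icc (0:ℝ) σ₀ := ⟨hσ.1, hσ.2.trans (min_le_left _ _)⟩
  set r := ρ⁻¹ * ‖y - prox x σ y‖ with hr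
  have hr0 : 0 ≤ r := mul_nonneg (by positivity) (norm_nonneg _)
  obtain ⟨y₀, hy₀⟩ := hYne
  have hDY0 : 0 ≤ DY := le_trans (norm_nonneg y₀) (hDY y₀ hy₀)
  have hμ' : (0:ℝ) ≤ 1/μ := by positivity
  have hd : (0:ℝ) ≤ 2*DY/δ := by positivity
  by_cases hcase : r ≤ δ
  · have hEB' := hEB x hx σ hσ' y hy hcase
    have h1 : infDist y (T x σ) ≤ (1/μ) * r := by
      rw [one_div, inv_mul_eq_div, le_div_iff₀ hμ, mul_comm]
      exact hEB'
    calc infDist y (T x σ) ≤ (1/μ) * r := h1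
      _ ≤ (1/μ + 2*DY/δ) * r := by nlinarith
  · push_neg at hcase
    -- T x σ is nonempty since Y is compact and the objective continuous
    have hYcpt : IsCompact Y := Metric.isCompact_of_isClosed_isBounded hYclosed hYbdd
    have hcont : Continuous (fun z => σ * f x z + g x z) := by
      have hf : Continuous (fun z => f x z) :=
        hfC2.continuous.comp (Continuous.prodMk_right x)
      have hg : Continuous (fun z => g x z) :=
        hgC2.continuous.comp (Continuous.prodMk_right x)
      exact (continuous_const.mul hf).add hg
    obtain ⟨t, htY, htmin⟩ := hYcpt.exists_isMinOn ⟨y₀, hy₀⟩ hcont.continuousOn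
    have htT : t ∈ T x σ := by
      rw [hT]
      exact ⟨htY, fun z hz => htmin hz⟩
    have h2 : infDist y (T x σ) ≤ 2 * DY := by
      calc infDist y (T x σ) ≤ dist y t := infDist_le_dist_of_mem htT
        _ = ‖y - t‖ := by rw [dist_eq_norm]
        _ ≤ ‖y‖ + ‖t‖ := norm_sub_le _ _
        _ ≤ DY + DY := add_le_add (hDY y hy) (hDY t (by rw [hT] at htT; exact htT.1))
        _ = 2 * DY := by ring
    have h3 : 2 * DY ≤ (2*DY/δ) * r := by
      rw [div_mul_eq_mul_div, le_div_iff₀ hδ]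
      nlinarith
    calc infDist y (T x σ) ≤ (2*DY/δ) * r := h2.trans h3
      _ ≤ (1/μ + 2*DY/δ) * r := by nlinarith
end

section
/- Let ρ ≤ 1/(8 l_{g,1}) and σ₀ l_{f,1} ≤ l_{g,1}. For any x ∈ X, any y ∈ ℝ^{d_y}, and any σ₁, σ₂ ∈ [0, σ₀], the proximal map is Lipschitz in the penalty parameter: ‖prox_{ρ h_{σ₁}(x,·)}(y) − prox_{ρ h_{σ₂}(x,·)}(y)‖ ≤ 3 ρ l_{f,0} |σ₁ − σ₂|. -/
/-!
For `σ ∈ [0, σ₀]` the prox objective `φ_σ = ρ h_σ(x, ·)` is `L`-weakly convex with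
`L = ρ (σ l_{f,1} + l_{g,1}) ≤ 1/4`, in the midpoint form `2 φ(m) ≤ φ(a) + φ(b) + L/4 ‖b - a‖²`,
which follows from the descent lemma at `m`. Testing the optimality of `z_i = prox_{φ_{σ_i}}(y)`
against the midpoint of `z₁, z₂` and using the parallelogram law gives
`3/8 ‖z₁ - z₂‖² ≤ ρ (σ₁ - σ₂) (f(x, z₂) - f(x, z₁))`, and the gradient bound on the convex set `Y`
makes the right side at most `ρ |σ₁ - σ₂| l_{f,0} ‖z₁ - z₂‖`; hence
`‖z₁ - z₂‖ ≤ 8/3 ρ l_{f,0} |σ₁ - σ₂|`.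
-/

open Set

section WeaklyConvex

variable {E : Type*} [NormedAddCommGroup E] [NormedSpace ℝ E] {k : E → ℝ} {L : ℝ}

theorem add_fderiv_sub_sq_le_of_lipschitz_fderiv (hk : Differentiable ℝ k)
    (hL : ∀ p q, ‖fderiv ℝ k p - fderiv ℝ k q‖ ≤ L * ‖p - q‖) (a b : E) :
    k a + fderiv ℝ k a (b - a) - L / 2 * ‖b - a‖ ^ 2 ≤ k b := by
  set v := b - a
  -- `w 0 ≤ w 1` is the claim, and `w' ≥ 0` on `[0, 1]` by the Lipschitz bound on `k'`.
  let w : ℝ → ℝ := fun t => k (a + t • v) - t * fderiv ℝ k a v + L * ‖v‖ ^ 2 / 2 * t ^ 2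
  have hw : ∀ t, HasDerivAt w (fderiv ℝ k (a + t • v) v - fderiv ℝ k a v + L * ‖v‖ ^ 2 * t) t := by
    intro t
    have hline : HasDerivAt (fun t : ℝ => a + t • v) v t := by
      simpa using ((hasDerivAt_id t).smul_const v).const_add a
    have hsq := (hasDerivAt_pow 2 t).const_mul (L * ‖v‖ ^ 2 / 2)
    refine ((((hk _).hasFDerivAt.comp_hasDerivAt t hline).sub
      ((hasDerivAt_id' t).mul_const (fderiv ℝ k a v))).add hsq).congr_deriv ?_
    push_cast; ring
  have hmono : MonotoneOn w (Icc 0 1) := by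
    refine monotoneOn_of_deriv_nonneg (convex_Icc 0 1)
      (fun t _ => (hw t).continuousAt.continuousWithinAt)
      (fun t _ => (hw t).differentiableAt.differentiableWithinAt) fun t ht => ?_
    rw [interior_Icc] at ht
    have hdiff : ‖fderiv ℝ k (a + t • v) - fderiv ℝ k a‖ ≤ L * (t * ‖v‖) := by
      simpa [norm_smul, abs_of_nonneg ht.1.le] using hL (a + t • v) a
    have happ := ((fderiv ℝ k (a + t • v) - fderiv ℝ k a).le_opNorm v).trans
      (mul_le_mul_of_nonneg_right hdiff (norm_nonneg v))
    rw [sub_apply, Real.norm_eq_abs] at happ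
    rw [(hw t).deriv]
    nlinarith [neg_abs_le (fderiv ℝ k (a + t • v) v - fderiv ℝ k a v)]
  have h01 := hmono (left_mem_Icc.2 zero_le_one) (right_mem_Icc.2 zero_le_one) zero_le_one
  norm_num [w, v] at h01 ⊢
  linarith

def MidpointWeaklyConvex (L : ℝ) (k : E → ℝ) : Prop :=
  ∀ a b, 2 * k (midpoint ℝ a b) ≤ k a + k b + L / 4 * ‖b - a‖ ^ 2

theorem midpointWeaklyConvex_of_lipschitz_fderiv (hk : Differentiable ℝ k)
    (hL : ∀ p q, ‖fderiv ℝ k p - fderiv ℝ k q‖ ≤ L * ‖p - q‖) :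
    MidpointWeaklyConvex L k := by
  intro a b
  set m := midpoint ℝ a b
  have ha := add_fderiv_sub_sq_le_of_lipschitz_fderiv hk hL m a
  have hb := add_fderiv_sub_sq_le_of_lipschitz_fderiv hk hL m b
  have hba : b - m = -(a - m) := by
    rw [left_sub_midpoint, right_sub_midpoint, ← smul_neg, neg_sub]
  have hnorm : ‖a - m‖ = ‖b - a‖ / 2 := by
    rw [← dist_eq_norm, dist_left_midpoint, dist_comm, dist_eq_norm]; norm_num; ring
  rw [hba, map_neg, norm_neg, hnorm] at hb
  rw [hnorm] at ha
  linarith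

namespace MidpointWeaklyConvex

variable {k₁ k₂ : E → ℝ} {L₁ L₂ : ℝ}

theorem add (h₁ : MidpointWeaklyConvex L₁ k₁) (h₂ : MidpointWeaklyConvex L₂ k₂) :
    MidpointWeaklyConvex (L₁ + L₂) (fun z => k₁ z + k₂ z) := fun a b => by
  linarith [h₁ a b, h₂ a b]

theorem const_mul (h : MidpointWeaklyConvex L k) {c : ℝ} (hc : 0 ≤ c) :
    MidpointWeaklyConvex (c * L) (fun z => c * k z) := fun a b => by
  nlinarith [mul_le_mul_of_nonneg_left (h a b) hc]

theorem mono (h : MidpointWeaklyConvex L₁ k) (hL : L₁ ≤ L₂) : MidpointWeaklyConvex L₂ k :=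
  fun a b => by nlinarith [h a b, sq_nonneg ‖b - a‖]

theorem comp_prodMk {E' : Type*} [NormedAddCommGroup E'] [NormedSpace ℝ E'] {k : E × E' → ℝ}
    (h : MidpointWeaklyConvex L k) (x : E) : MidpointWeaklyConvex L (fun z => k (x, z)) := by
  intro a b
  have hmid : midpoint ℝ ((x, a) : E × E') (x, b) = (x, midpoint ℝ a b) := by
    ext
    · exact midpoint_self ℝ x
    · simp [midpoint_eq_smul_add]
  simpa [hmid, Prod.norm_def] using h (x, a) (x, b)

end MidpointWeaklyConvex

end WeaklyConvex

section Prox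

variable {F : Type*} [NormedAddCommGroup F] [InnerProductSpace ℝ F]

theorem Convex.norm_image_sub_le_of_norm_gradient_le [CompleteSpace F] {φ : F → ℝ} {s : Set F}
    {C : ℝ} (hφ : ∀ z ∈ s, DifferentiableAt ℝ φ z) (bound : ∀ z ∈ s, ‖gradient φ z‖ ≤ C)
    (hs : Convex ℝ s) {a b : F} (ha : a ∈ s) (hb : b ∈ s) : ‖φ b - φ a‖ ≤ C * ‖b - a‖ :=
  hs.norm_image_sub_le_of_norm_fderiv_le hφ (fun z hz => by simpa [gradient] using bound z hz) ha hb

theorem sq_norm_sub_le_of_isMinOn_prox {φ₁ φ₂ : F → ℝ} {Y : Set F} (hY : Convex ℝ Y)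
    (hφ₁ : MidpointWeaklyConvex (1 / 4) φ₁) (hφ₂ : MidpointWeaklyConvex (1 / 4) φ₂)
    {y z₁ z₂ : F} (hz₁ : z₁ ∈ Y) (hz₂ : z₂ ∈ Y)
    (hmin₁ : IsMinOn (fun z => φ₁ z + ‖z - y‖ ^ 2 / 2) Y z₁)
    (hmin₂ : IsMinOn (fun z => φ₂ z + ‖z - y‖ ^ 2 / 2) Y z₂) :
    3 / 8 * ‖z₁ - z₂‖ ^ 2 ≤ (φ₁ z₂ - φ₂ z₂) - (φ₁ z₁ - φ₂ z₁) := by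
  set m := midpoint ℝ z₁ z₂
  have hm : m ∈ Y := hY.midpoint_mem hz₁ hz₂
  have h₁ := isMinOn_iff.1 hmin₁ m hm
  have h₂ := isMinOn_iff.1 hmin₂ m hm
  have hpar := EuclideanGeometry.dist_sq_add_dist_sq_eq_two_mul_dist_midpoint_sq_add_half_dist_sq
    y z₁ z₂
  simp only [dist_comm y, dist_eq_norm] at hpar
  have hmid₁ := hφ₁ z₁ z₂
  have hmid₂ := hφ₂ z₁ z₂
  rw [norm_sub_rev] at hmid₁ hmid₂
  linarith

end Prox

theorem midpointWeaklyConvex_penalized {E E' : Type*} [NormedAddCommGroup E] [NormedSpace ℝ E]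
    [NormedAddCommGroup E'] [NormedSpace ℝ E'] {f g : E → E' → ℝ} {lf1 lg1 : ℝ}
    (hf : Differentiable ℝ (Function.uncurry f))
    (hLipf : ∀ p q, ‖fderiv ℝ (Function.uncurry f) p - fderiv ℝ (Function.uncurry f) q‖ ≤
      lf1 * ‖p - q‖)
    (hg : Differentiable ℝ (Function.uncurry g))
    (hLipg : ∀ p q, ‖fderiv ℝ (Function.uncurry g) p - fderiv ℝ (Function.uncurry g) q‖ ≤
      lg1 * ‖p - q‖)
    (x : E) {ρ σ : ℝ} (hρ : 0 ≤ ρ) (hσ : 0 ≤ σ) :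
    MidpointWeaklyConvex (ρ * (σ * lf1 + lg1)) (fun z => ρ * (σ * f x z + g x z)) :=
  ((((midpointWeaklyConvex_of_lipschitz_fderiv hf hLipf).comp_prodMk x).const_mul hσ).add
    ((midpointWeaklyConvex_of_lipschitz_fderiv hg hLipg).comp_prodMk x)).const_mul hρ

theorem mul_add_le_one_fourth {ρ σ σ₀ lf1 lg1 : ℝ} (hρpos : 0 < ρ) (hρ : ρ ≤ 1 / (8 * lg1))
    (hσ : σ ∈ Icc 0 σ₀) (hσ₀l : σ₀ * lf1 ≤ lg1) : ρ * (σ * lf1 + lg1) ≤ 1 / 4 := by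
  have hlg : 0 < lg1 := by
    by_contra! h
    linarith [one_div_nonpos.2 (by linarith : 8 * lg1 ≤ 0)]
  rw [le_div_iff₀ (by positivity)] at hρ
  have hσlf : σ * lf1 ≤ lg1 := by
    rcases le_or_gt 0 lf1 with h | h <;> nlinarith [hσ.1, hσ.2]
  nlinarith [mul_le_mul_of_nonneg_left hσlf hρpos.le]

theorem stmt11_general
    (dx dy : ℕ)
    (X : Set (EuclideanSpace ℝ (Fin dx)))
    (Y : Set (EuclideanSpace ℝ (Fin dy)))
    (hYconv : Convex ℝ Y)
    (f g : EuclideanSpace ℝ (Fin dx) → EuclideanSpace ℝ (Fin dy) → ℝ)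
    (lf0 lf1 lg1 σ₀ ρ : ℝ)
    (hfC2 : ContDiff ℝ 2 (Function.uncurry f))
    (hgC2 : ContDiff ℝ 2 (Function.uncurry g))
    (hLipf : ∀ p q : EuclideanSpace ℝ (Fin dx) × EuclideanSpace ℝ (Fin dy),
      ‖fderiv ℝ (Function.uncurry f) p - fderiv ℝ (Function.uncurry f) q‖ ≤ lf1 * ‖p - q‖)
    (hLipg : ∀ p q : EuclideanSpace ℝ (Fin dx) × EuclideanSpace ℝ (Fin dy),
      ‖fderiv ℝ (Function.uncurry g) p - fderiv ℝ (Function.uncurry g) q‖ ≤ lg1 * ‖p - q‖)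
    (hlf0 : ∀ x ∈ X, ∀ y ∈ Y, ‖gradient (fun y' => f x y') y‖ ≤ lf0)
    (hρpos : 0 < ρ) (hρ : ρ ≤ 1 / (8 * lg1))
    (hσ₀l : σ₀ * lf1 ≤ lg1)
    -- `proxh x σ y` is the unique minimizer over `z ∈ Y` of `ρ h_σ(x,z) + ‖z − y‖²/2`
    (proxh : EuclideanSpace ℝ (Fin dx) → ℝ → EuclideanSpace ℝ (Fin dy) → EuclideanSpace ℝ (Fin dy))
    (hproxh : ∀ x (σ : ℝ), σ ∈ Icc 0 σ₀ → ∀ y, proxh x σ y ∈ Y ∧ ∀ z ∈ Y,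
      ρ * (σ * f x (proxh x σ y) + g x (proxh x σ y)) + ‖proxh x σ y - y‖ ^ 2 / 2
        ≤ ρ * (σ * f x z + g x z) + ‖z - y‖ ^ 2 / 2) :
    ∀ x ∈ X, ∀ y : EuclideanSpace ℝ (Fin dy), ∀ σ₁ ∈ Icc (0:ℝ) σ₀, ∀ σ₂ ∈ Icc (0:ℝ) σ₀,
      ‖proxh x σ₁ y - proxh x σ₂ y‖ ≤ 3 * ρ * lf0 * |σ₁ - σ₂| := by
  intro x hx y σ₁ hσ₁ σ₂ hσ₂
  have hfd := hfC2.differentiable two_ne_zero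
  have hconv : ∀ σ ∈ Icc 0 σ₀, MidpointWeaklyConvex (1 / 4) (fun z => ρ * (σ * f x z + g x z)) :=
    fun σ hσ => (midpointWeaklyConvex_penalized hfd hLipf (hgC2.differentiable two_ne_zero) hLipg
      x hρpos.le hσ.1).mono (mul_add_le_one_fourth hρpos hρ hσ hσ₀l)
  obtain ⟨hz₁, hmin₁⟩ := hproxh x σ₁ hσ₁ y
  obtain ⟨hz₂, hmin₂⟩ := hproxh x σ₂ hσ₂ y
  set z₁ := proxh x σ₁ y
  set z₂ := proxh x σ₂ y
  have hclose := sq_norm_sub_le_of_isMinOn_prox hYconv (hconv σ₁ hσ₁) (hconv σ₂ hσ₂) hz₁ hz₂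
    (isMinOn_iff.2 hmin₁) (isMinOn_iff.2 hmin₂)
  have hf_lip : |f x z₂ - f x z₁| ≤ lf0 * ‖z₁ - z₂‖ := by
    rw [← Real.norm_eq_abs, norm_sub_rev z₁ z₂]
    exact hYconv.norm_image_sub_le_of_norm_gradient_le
      (fun z _ => (hfd _).comp z ((hasFDerivAt_prodMk_right x z).differentiableAt))
      (hlf0 x hx) hz₁ hz₂
  have hlf0_nonneg : 0 ≤ lf0 := (norm_nonneg _).trans (hlf0 x hx z₁ hz₁)
  have hΔ : 3 / 8 * ‖z₁ - z₂‖ ^ 2 ≤ ρ * |σ₁ - σ₂| * (lf0 * ‖z₁ - z₂‖) := by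
    calc 3 / 8 * ‖z₁ - z₂‖ ^ 2 ≤ ρ * ((σ₁ - σ₂) * (f x z₂ - f x z₁)) := by linarith
      _ ≤ ρ * (|σ₁ - σ₂| * |f x z₂ - f x z₁|) := by
        rw [← abs_mul]; exact mul_le_mul_of_nonneg_left (le_abs_self _) hρpos.le
      _ ≤ ρ * |σ₁ - σ₂| * (lf0 * ‖z₁ - z₂‖) := by
        rw [mul_assoc]; gcongr
  nlinarith [norm_nonneg (z₁ - z₂), mul_nonneg (mul_nonneg hρpos.le hlf0_nonneg) (abs_nonneg (σ₁ - σ₂))]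

/-- Lipschitz dependence of the proximal map on the penalty parameter:
for `ρ ≤ 1/(8 l_{g,1})` and `σ₀ l_{f,1} ≤ l_{g,1}`,
`‖prox_{ρ h_{σ₁}(x,·)}(y) − prox_{ρ h_{σ₂}(x,·)}(y)‖ ≤ 3 ρ l_{f,0} |σ₁ − σ₂|`. -/
theorem stmt11
    (dx dy : ℕ)
    (X : Set (EuclideanSpace ℝ (Fin dx)))
    (Y : Set (EuclideanSpace ℝ (Fin dy)))
    (hXne : X.Nonempty) (hXclosed : IsClosed X) (hXconv : Convex ℝ X)
    (hYne : Y.Nonempty) (hYclosed : IsClosed Y) (hYconv : Convex ℝ Y)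
    (hYbdd : Bornology.IsBounded Y)
    (f g : EuclideanSpace ℝ (Fin dx) → EuclideanSpace ℝ (Fin dy) → ℝ)
    (lf0 lf1 lg1 σ₀ ρ : ℝ)
    (hfC2 : ContDiff ℝ 2 (Function.uncurry f))
    (hgC2 : ContDiff ℝ 2 (Function.uncurry g))
    (hLipf : ∀ p q : EuclideanSpace ℝ (Fin dx) × EuclideanSpace ℝ (Fin dy),
      ‖fderiv ℝ (Function.uncurry f) p - fderiv ℝ (Function.uncurry f) q‖ ≤ lf1 * ‖p - q‖)
    (hLipg : ∀ p q : EuclideanSpace ℝ (Fin dx) × EuclideanSpace ℝ (Fin dy),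
      ‖fderiv ℝ (Function.uncurry g) p - fderiv ℝ (Function.uncurry g) q‖ ≤ lg1 * ‖p - q‖)
    (hlf0 : ∀ x ∈ X, ∀ y ∈ Y, ‖gradient (fun y' => f x y') y‖ ≤ lf0)
    (hρpos : 0 < ρ) (hρ : ρ ≤ 1 / (8 * lg1))
    (hσ₀ : 0 ≤ σ₀) (hσ₀l : σ₀ * lf1 ≤ lg1)
    -- `proxh x σ y` is the unique minimizer over `z ∈ Y` of `ρ h_σ(x,z) + ‖z − y‖²/2`
    (proxh : EuclideanSpace ℝ (Fin dx) → ℝ → EuclideanSpace ℝ (Fin dy) → EuclideanSpace ℝ (Fin dy))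
    (hproxh : ∀ x (σ : ℝ), σ ∈ Icc 0 σ₀ → ∀ y, proxh x σ y ∈ Y ∧ ∀ z ∈ Y,
      ρ * (σ * f x (proxh x σ y) + g x (proxh x σ y)) + ‖proxh x σ y - y‖ ^ 2 / 2
        ≤ ρ * (σ * f x z + g x z) + ‖z - y‖ ^ 2 / 2) :
    ∀ x ∈ X, ∀ y : EuclideanSpace ℝ (Fin dy), ∀ σ₁ ∈ Icc (0:ℝ) σ₀, ∀ σ₂ ∈ Icc (0:ℝ) σ₀,
      ‖proxh x σ₁ y - proxh x σ₂ y‖ ≤ 3 * ρ * lf0 * |σ₁ - σ₂| :=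
  stmt11_general dx dy X Y hYconv f g lf0 lf1 lg1 σ₀ ρ hfC2 hgC2 hLipf hLipg hlf0 hρpos hρ hσ₀l
    proxh hproxh
end

section
/- Let Y ⊆ ℝ^d be nonempty closed convex, ρ > 0, and let F : ℝ^d → ℝ be differentiable with (2/ρ)-Lipschitz gradient. For any w ∈ Y, any error vector e ∈ ℝ^d, and any step size 0 < γ ≤ ρ/4, the inexact projected gradient step w⁺ := Π_Y(w − γ(∇F(w) + e)) satisfies the descent inequality F(w⁺) ≤ F(w) − ‖w⁺ − w‖²/(2γ) + 4γ‖e‖². -/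
/-!
Write `s = w⁺ - w`. The variational inequality of the projection, tested at `w ∈ Y`, gives
`‖s‖² + γ ⟪∇F w + e, s⟫ ≤ 0`, while the descent lemma for the `(2/ρ)`-smooth `F` gives
`F w⁺ ≤ F w + ⟪∇F w, s⟫ + ‖s‖²/ρ`. Eliminating `⟪∇F w, s⟫` leaves the error term `-⟪e, s⟫`,
which Young's inequality splits as `‖s‖²/(4γ) + γ‖e‖²`; the step-size condition `γ ≤ ρ/4`
makes `‖s‖²/ρ ≤ ‖s‖²/(4γ)`.
-/

open Set

open scoped RealInnerProductSpace

section

variable {E : Type*} [NormedAddCommGroup E] [InnerProductSpace ℝ E]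

theorem le_add_inner_gradient_add_sq_of_lipschitz_gradient [CompleteSpace E] {F : E → ℝ}
    (hF : Differentiable ℝ F) {L : ℝ}
    (hlip : ∀ a b : E, ‖gradient F a - gradient F b‖ ≤ L * ‖a - b‖) (a b : E) :
    F b ≤ F a + ⟪gradient F a, b - a⟫ + L / 2 * ‖b - a‖ ^ 2 := by
  set s := b - a
  -- `φ t = F (a + t • s) - t ⟪∇F a, s⟫ - (L/2) t² ‖s‖²` is antitone on `[0, ∞)`.
  set φ' : ℝ → ℝ := fun t ↦ ⟪gradient F (a + t • s) - gradient F a, s⟫ - L * t * ‖s‖ ^ 2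
  have hφ : ∀ t : ℝ, HasDerivAt
      (fun t : ℝ ↦ F (a + t • s) - t * ⟪gradient F a, s⟫ - L / 2 * t ^ 2 * ‖s‖ ^ 2) (φ' t) t := by
    intro t
    have hline : HasDerivAt (fun t : ℝ ↦ a + t • s) s t := by
      simpa using ((hasDerivAt_id t).smul_const s).const_add a
    have hFline := (hF (a + t • s)).hasGradientAt.hasFDerivAt.comp_hasDerivAt t hline
    rw [InnerProductSpace.toDual_apply_apply] at hFline
    refine ((hFline.sub ((hasDerivAt_id t).mul_const _)).sub
      (((hasDerivAt_pow 2 t).const_mul (L / 2)).mul_const _)).congr_deriv ?_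
    simp only [φ', inner_sub_left]
    ring
  have hφ'_nonpos : ∀ t ∈ interior (Ici (0 : ℝ)), φ' t ≤ 0 := by
    rw [interior_Ici]
    intro t (ht : 0 < t)
    rw [sub_nonpos]
    calc ⟪gradient F (a + t • s) - gradient F a, s⟫
        ≤ ‖gradient F (a + t • s) - gradient F a‖ * ‖s‖ := real_inner_le_norm _ _
      _ ≤ L * ‖t • s‖ * ‖s‖ := by
          gcongr
          simpa using hlip (a + t • s) a
      _ = L * t * ‖s‖ ^ 2 := by rw [norm_smul, Real.norm_of_nonneg ht.le]; ring
  have hanti := antitoneOn_of_hasDerivWithinAt_nonpos (convex_Ici 0)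
    (fun t _ ↦ (hφ t).continuousAt.continuousWithinAt)
    (fun t _ ↦ (hφ t).hasDerivWithinAt) hφ'_nonpos
    (mem_Ici.2 le_rfl) (mem_Ici.2 zero_le_one) zero_le_one
  simp only [one_smul, zero_smul, add_zero, add_sub_cancel, s] at hanti
  linarith

theorem inner_sub_le_zero_of_forall_norm_sub_le {Y : Set E} (hY : Convex ℝ Y) {u p : E}
    (hp : p ∈ Y) (hmin : ∀ v ∈ Y, ‖p - u‖ ≤ ‖v - u‖) {v : E} (hv : v ∈ Y) :
    ⟪u - p, v - p⟫ ≤ 0 := by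
  have : Nonempty Y := ⟨⟨p, hp⟩⟩
  refine (norm_eq_iInf_iff_real_inner_le_zero hY hp).mp ?_ v hv
  refine le_antisymm (le_ciInf fun y ↦ ?_) (ciInf_le (f := fun y : Y ↦ ‖u - y‖) ⟨0, ?_⟩ ⟨p, hp⟩)
  · simpa only [norm_sub_rev u] using hmin y y.2
  · rintro _ ⟨y, rfl⟩
    exact norm_nonneg _

theorem norm_sq_add_inner_le_zero_of_projected_step {Y : Set E} (hY : Convex ℝ Y) {w v p : E}
    {γ : ℝ} (hw : w ∈ Y) (hp : p ∈ Y) (hmin : ∀ y ∈ Y, ‖p - (w - γ • v)‖ ≤ ‖y - (w - γ • v)‖) :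
    ‖p - w‖ ^ 2 + γ * ⟪v, p - w⟫ ≤ 0 := by
  have h := inner_sub_le_zero_of_forall_norm_sub_le hY hp hmin hw
  have hu : w - γ • v - p = -((p - w) + γ • v) := by module
  rwa [hu, ← neg_sub p w, inner_neg_neg, inner_add_left, real_inner_smul_left,
    real_inner_self_eq_norm_sq] at h

theorem inner_le_norm_sq_div_add_mul_norm_sq (x y : E) {γ : ℝ} (hγ : 0 < γ) :
    ⟪x, y⟫ ≤ ‖y‖ ^ 2 / (4 * γ) + γ * ‖x‖ ^ 2 := by
  have hcs := real_inner_le_norm x y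
  rw [div_add' _ _ _ (by positivity), le_div_iff₀ (by positivity)]
  nlinarith [sq_nonneg (‖y‖ - 2 * γ * ‖x‖)]

end

theorem stmt16_general
    (d : ℕ)
    (Y : Set (EuclideanSpace ℝ (Fin d)))
    (hYconv : Convex ℝ Y)
    (ρ : ℝ)
    (F : EuclideanSpace ℝ (Fin d) → ℝ)
    (hFdiff : Differentiable ℝ F)
    (hFsmooth : ∀ a b : EuclideanSpace ℝ (Fin d),
      ‖gradient F a - gradient F b‖ ≤ (2 / ρ) * ‖a - b‖)
    -- metric projection onto `Y`
    (projY : EuclideanSpace ℝ (Fin d) → EuclideanSpace ℝ (Fin d))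
    (hproj : ∀ u, projY u ∈ Y ∧ ∀ v ∈ Y, ‖projY u - u‖ ≤ ‖v - u‖)
    (w : EuclideanSpace ℝ (Fin d)) (hw : w ∈ Y)
    (e : EuclideanSpace ℝ (Fin d))
    (γ : ℝ) (hγpos : 0 < γ) (hγ : γ ≤ ρ / 4) :
    F (projY (w - γ • (gradient F w + e)))
      ≤ F w - ‖projY (w - γ • (gradient F w + e)) - w‖ ^ 2 / (2 * γ) + 4 * γ * ‖e‖ ^ 2 := by
  set g := gradient F w
  set p := projY (w - γ • (g + e))
  have hvar : ‖p - w‖ ^ 2 + γ * (⟪g, p - w⟫ + ⟪e, p - w⟫) ≤ 0 := by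
    rw [← inner_add_left]
    exact norm_sq_add_inner_le_zero_of_projected_step hYconv hw (hproj _).1 (hproj _).2
  have hdesc := le_add_inner_gradient_add_sq_of_lipschitz_gradient hFdiff hFsmooth w p
  have hsmooth : 2 / ρ / 2 * ‖p - w‖ ^ 2 ≤ ‖p - w‖ ^ 2 / (4 * γ) := by
    rw [div_div_cancel_left' two_ne_zero, ← div_eq_inv_mul]
    gcongr
    linarith
  have hyoung := inner_le_norm_sq_div_add_mul_norm_sq (-e) (p - w) hγpos
  rw [inner_neg_left, norm_neg] at hyoung
  have hinner : ⟪g, p - w⟫ + ⟪e, p - w⟫ ≤ -‖p - w‖ ^ 2 / γ := by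
    rw [le_div_iff₀ hγpos]
    linarith
  have hsplit : -‖p - w‖ ^ 2 / γ + ‖p - w‖ ^ 2 / (4 * γ) + ‖p - w‖ ^ 2 / (4 * γ)
      = -(‖p - w‖ ^ 2 / (2 * γ)) := by
    field_simp
    ring
  linarith [mul_nonneg hγpos.le (sq_nonneg ‖e‖)]

/-- Descent inequality for one inexact projected gradient step on a
`(2/ρ)`-smooth function over a nonempty closed convex set `Y`. -/
theorem stmt16
    (d : ℕ)
    (Y : Set (EuclideanSpace ℝ (Fin d)))
    (hYne : Y.Nonempty) (hYclosed : IsClosed Y) (hYconv : Convex ℝ Y)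
    (ρ : ℝ) (hρ : 0 < ρ)
    (F : EuclideanSpace ℝ (Fin d) → ℝ)
    (hFdiff : Differentiable ℝ F)
    (hFsmooth : ∀ a b : EuclideanSpace ℝ (Fin d),
      ‖gradient F a - gradient F b‖ ≤ (2 / ρ) * ‖a - b‖)
    -- metric projection onto `Y`
    (projY : EuclideanSpace ℝ (Fin d) → EuclideanSpace ℝ (Fin d))
    (hproj : ∀ u, projY u ∈ Y ∧ ∀ v ∈ Y, ‖projY u - u‖ ≤ ‖v - u‖)
    (w : EuclideanSpace ℝ (Fin d)) (hw : w ∈ Y)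
    (e : EuclideanSpace ℝ (Fin d))
    (γ : ℝ) (hγpos : 0 < γ) (hγ : γ ≤ ρ / 4) :
    F (projY (w - γ • (gradient F w + e)))
      ≤ F w - ‖projY (w - γ • (gradient F w + e)) - w‖ ^ 2 / (2 * γ) + 4 * γ * ‖e‖ ^ 2 :=
  stmt16_general d Y hYconv ρ F hFdiff hFsmooth projY hproj w hw e γ hγpos hγ
end

section
/- Let Y = [−1,1] ⊂ ℝ and, for x ∈ [−1,1], define S(x) := argmin_{y∈[−1,1]} x·y, the hyper-objective ψ(x) := min_{y∈S(x)} (x² + y²), and, for σ > 0, the penalized hyper-objective ψ_σ(x) := σ^{-1}( min_{y∈[−1,1]} (σ(x² + y²) + x·y) − min_{z∈[−1,1]} x·z ). Then: (i) ψ(x) = x² + 1 for every x ∈ [−1,1] with x ≠ 0, while ψ(0) = 0; consequently ψ is not continuous at 0; (ii) ψ_σ(0) = 0 for every σ > 0, and for every x ≠ 0 and every σ ∈ (0, |x|/2], ψ_σ(x) = x² + 1; in particular lim_{σ→0⁺} ψ_σ(x) = ψ(x) pointwise. -/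
open Set Metric Filter

/-- Lower-level solution set `S(x) = argmin_{y ∈ [−1,1]} x·y` for `g(x,y) = x y`. -/
noncomputable def S18 (x : ℝ) : Set ℝ :=
  {y ∈ Icc (-1:ℝ) 1 | ∀ z ∈ Icc (-1:ℝ) 1, x * y ≤ x * z}

/-- Hyper-objective `ψ(x) = min_{y ∈ S(x)} (x² + y²)` for `f(x,y) = x² + y²`. -/
noncomputable def psi18 (x : ℝ) : ℝ :=
  sInf ((fun y => x ^ 2 + y ^ 2) '' S18 x)

/-- Penalized hyper-objective
`ψ_σ(x) = σ⁻¹ (min_{y∈[−1,1]} (σ(x²+y²) + x·y) − min_{z∈[−1,1]} x·z)`. -/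
noncomputable def psiSig18 (σ x : ℝ) : ℝ :=
  σ⁻¹ * (sInf ((fun y => σ * (x ^ 2 + y ^ 2) + x * y) '' Icc (-1:ℝ) 1)
    - sInf ((fun z => x * z) '' Icc (-1:ℝ) 1))

open Topology

/-!
For `x ≠ 0` the lower level has the single solution `y = -sign x`, so `ψ(x) = x² + 1`, whereas
at `x = 0` every `y` solves it and `ψ(0) = 0`: `ψ` jumps at `0`. For the penalty, once
`2σ ≤ |x|` the vertex `-x/(2σ)` of the parabola `y ↦ σy² + xy` lies outside `[-1,1]`, so its
minimum over `[-1,1]` is still attained at `y = -sign x` and `ψ_σ(x) = ψ(x)` exactly.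
-/

lemma isLeast_image_mul_Icc (x : ℝ) :
    IsLeast ((fun z => x * z) '' Icc (-1:ℝ) 1) (-|x|) := by
  refine ⟨?_, ?_⟩
  · rcases abs_cases x with ⟨hx, -⟩ | ⟨hx, -⟩
    · exact ⟨-1, ⟨le_rfl, by norm_num⟩, by rw [hx]; ring⟩
    · exact ⟨1, ⟨by norm_num, le_rfl⟩, by rw [hx]; ring⟩
  · rintro _ ⟨z, ⟨hz₁, hz₂⟩, rfl⟩
    rcases abs_cases x with ⟨hx, hx'⟩ | ⟨hx, hx'⟩ <;> rw [hx] <;> nlinarith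

lemma isLeast_image_penalty_Icc {σ x : ℝ} (hσ : 0 < σ) (hσx : 2 * σ ≤ |x|) :
    IsLeast ((fun y => σ * (x ^ 2 + y ^ 2) + x * y) '' Icc (-1:ℝ) 1)
      (σ * (x ^ 2 + 1) - |x|) := by
  refine ⟨?_, ?_⟩
  · rcases abs_cases x with ⟨hx, -⟩ | ⟨hx, -⟩
    · exact ⟨-1, ⟨le_rfl, by norm_num⟩, by rw [hx]; ring⟩
    · exact ⟨1, ⟨by norm_num, le_rfl⟩, by rw [hx]; ring⟩
  · rintro _ ⟨y, ⟨hy₁, hy₂⟩, rfl⟩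
    -- the gap to the minimum factors as `(1 ± y) (σ (y ∓ 1) ± x)`, a product of two nonnegatives
    rcases abs_cases x with ⟨hx, hx'⟩ | ⟨hx, hx'⟩ <;> rw [hx] at hσx ⊢
    · nlinarith [mul_nonneg (by linarith : (0:ℝ) ≤ 1 + y) (by nlinarith : 0 ≤ σ * (y - 1) + x)]
    · nlinarith [mul_nonneg (by linarith : (0:ℝ) ≤ 1 - y) (by nlinarith : 0 ≤ σ * (-1 - y) - x)]

lemma isLeast_image_penalty_Icc_zero {σ : ℝ} (hσ : 0 ≤ σ) :
    IsLeast ((fun y => σ * ((0:ℝ) ^ 2 + y ^ 2) + 0 * y) '' Icc (-1:ℝ) 1) 0 :=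
  ⟨⟨0, ⟨by norm_num, by norm_num⟩, by ring⟩,
    by rintro _ ⟨y, -, rfl⟩; simp only [zero_mul, add_zero]; positivity⟩

lemma S18_of_pos {x : ℝ} (hx : 0 < x) : S18 x = {-1} := by
  ext y
  simp only [S18, mem_ofPred_eq, mem_singleton_iff, mem_Icc]
  constructor
  · rintro ⟨⟨hy₁, -⟩, hmin⟩
    nlinarith [hmin (-1) ⟨le_rfl, by norm_num⟩]
  · rintro rfl
    exact ⟨⟨le_rfl, by norm_num⟩, fun z hz => by nlinarith [hz.1]⟩

lemma S18_of_neg {x : ℝ} (hx : x < 0) : S18 x = {1} := by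
  ext y
  simp only [S18, mem_ofPred_eq, mem_singleton_iff, mem_Icc]
  constructor
  · rintro ⟨⟨-, hy₂⟩, hmin⟩
    nlinarith [hmin 1 ⟨by norm_num, le_rfl⟩]
  · rintro rfl
    exact ⟨⟨by norm_num, le_rfl⟩, fun z hz => by nlinarith [hz.2]⟩

lemma S18_zero : S18 0 = Icc (-1:ℝ) 1 := by
  ext y; simp [S18]

lemma psi18_of_ne_zero {x : ℝ} (hx : x ≠ 0) : psi18 x = x ^ 2 + 1 := by
  rcases hx.lt_or_gt with hx | hx
  · rw [psi18, S18_of_neg hx, image_singleton, csInf_singleton, one_pow]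
  · rw [psi18, S18_of_pos hx, image_singleton, csInf_singleton, neg_one_sq]

lemma psi18_zero : psi18 0 = 0 := by
  rw [psi18, S18_zero]
  refine IsLeast.csInf_eq ⟨⟨0, ⟨by norm_num, by norm_num⟩, by norm_num⟩, ?_⟩
  rintro _ ⟨y, -, rfl⟩
  positivity

lemma not_continuousWithinAt_psi18 : ¬ ContinuousWithinAt psi18 (Icc (-1:ℝ) 1) 0 := by
  intro hcont
  have hnhds : 𝓝[>] (0:ℝ) ≤ 𝓝[Icc (-1:ℝ) 1] 0 :=
    nhdsWithin_le_of_mem (mem_nhdsWithin_of_mem_nhds (Icc_mem_nhds (by norm_num) (by norm_num)))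
  have hto_zero : Tendsto psi18 (𝓝[>] 0) (𝓝 0) := by
    simpa only [psi18_zero] using hcont.tendsto.mono_left hnhds
  have hto_one : Tendsto psi18 (𝓝[>] 0) (𝓝 1) := by
    have hpoly : Tendsto (fun x : ℝ => x ^ 2 + 1) (𝓝[>] 0) (𝓝 1) := by
      have hcont : Continuous fun x : ℝ => x ^ 2 + 1 := by fun_prop
      simpa using hcont.continuousWithinAt (s := Ioi 0) (x := 0) |>.tendsto
    refine hpoly.congr' ?_
    filter_upwards [self_mem_nhdsWithin] with x hx
    exact (psi18_of_ne_zero (ne_of_gt hx)).symm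
  exact zero_ne_one (tendsto_nhds_unique hto_zero hto_one)

lemma psiSig18_zero {σ : ℝ} (hσ : 0 < σ) : psiSig18 σ 0 = 0 := by
  rw [psiSig18, (isLeast_image_penalty_Icc_zero hσ.le).csInf_eq,
    (isLeast_image_mul_Icc 0).csInf_eq, abs_zero, neg_zero, sub_zero, mul_zero]

lemma psiSig18_of_two_mul_le_abs {σ x : ℝ} (hσ : 0 < σ) (hσx : 2 * σ ≤ |x|) :
    psiSig18 σ x = x ^ 2 + 1 := by
  rw [psiSig18, (isLeast_image_penalty_Icc hσ hσx).csInf_eq, (isLeast_image_mul_Icc x).csInf_eq]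
  field_simp
  ring

lemma psiSig18_eventuallyEq_psi18 (x : ℝ) :
    (fun σ => psiSig18 σ x) =ᶠ[𝓝[>] 0] fun _ => psi18 x := by
  rcases eq_or_ne x 0 with rfl | hx
  · filter_upwards [self_mem_nhdsWithin] with σ hσ
    rw [psiSig18_zero hσ, psi18_zero]
  · filter_upwards [Ioo_mem_nhdsGT (by positivity : (0:ℝ) < |x| / 2)] with σ hσ
    rw [psiSig18_of_two_mul_le_abs hσ.1 (by linarith [hσ.2]), psi18_of_ne_zero hx]

/-- For the bilevel instance `f(x,y) = x² + y²`, `g(x,y) = x y` on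
`X = Y = [−1,1]`: (i) `ψ(x) = x² + 1` for `x ≠ 0` while `ψ(0) = 0`, so `ψ` is not
continuous at `0`; (ii) `ψ_σ(0) = 0` for all `σ > 0`, and `ψ_σ(x) = x² + 1` for `x ≠ 0`
and `σ ∈ (0, |x|/2]`; in particular `ψ_σ → ψ` pointwise as `σ → 0⁺`. -/
theorem stmt18 :
    (∀ x ∈ Icc (-1:ℝ) 1, x ≠ 0 → psi18 x = x ^ 2 + 1) ∧
    psi18 0 = 0 ∧
    ¬ ContinuousWithinAt psi18 (Icc (-1:ℝ) 1) 0 ∧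
    (∀ σ : ℝ, 0 < σ → psiSig18 σ 0 = 0) ∧
    (∀ x ∈ Icc (-1:ℝ) 1, x ≠ 0 → ∀ σ : ℝ, 0 < σ → σ ≤ |x| / 2 → psiSig18 σ x = x ^ 2 + 1) ∧
    (∀ x ∈ Icc (-1:ℝ) 1,
      Tendsto (fun σ => psiSig18 σ x) (nhdsWithin 0 (Ioi 0)) (nhds (psi18 x))) :=
  ⟨fun _ _ hx => psi18_of_ne_zero hx,
    psi18_zero,
    not_continuousWithinAt_psi18,
    fun _ hσ => psiSig18_zero hσ,
    fun _ _ _ _ hσ hσx => psiSig18_of_two_mul_le_abs hσ (by linarith),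
    fun x _ => tendsto_const_nhds.congr' (psiSig18_eventuallyEq_psi18 x).symm⟩
end

section
/- Let X = [−2,2], Y = [−1,1], f(x,y) = −y, and g(x,y) = (y − x)². Define S(x) := argmin_{y∈[−1,1]} (y − x)², ψ(x) := min_{y∈S(x)} (−y), and, for σ > 0, ψ_σ(x) := σ^{-1}( min_{y∈[−1,1]} (−σy + (y − x)²) − min_{z∈[−1,1]} (z − x)² ). Then: (i) ψ(x) = 1 for x ∈ [−2,−1], ψ(x) = −x for x ∈ [−1,1], and ψ(x) = −1 for x ∈ [1,2]; consequently ψ is not differentiable at x = −1 nor at x = 1; (ii) for every σ ∈ (0,1], ψ_σ is differentiable at x = 1 and at x = −1, with ψ_σ′(1) = 0 and ψ_σ′(−1) = −1. -/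
/-!
The lower-level problem `min_{y ∈ [a,b]} (y - x)²` has the unique solution `P x`, the projection
of `x` onto `[a,b]`, and optimal value `(P x - x)²`. Hence `ψ = -P`, which has kinks at `±1`.
Completing the square, `-σ y + (y - x)² = (y - (x + σ/2))² - σ x - σ²/4`, so the penalised
lower-level problem is solved by `P (x + σ/2)`. The value function `(P x - x)²` is `C¹` with
derivative `2 (x - P x)`, and therefore `ψ_σ` is differentiable everywhere with
`ψ_σ'(x) = 2 σ⁻¹ (P x - P (x + σ/2))`, which is `0` at `1` and `-1` at `-1`.
-/

open Set Metric Filter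

/-- Lower-level solution set `S(x) = argmin_{y ∈ [−1,1]} (y − x)²`. -/
noncomputable def S19 (x : ℝ) : Set ℝ :=
  {y ∈ Icc (-1:ℝ) 1 | ∀ z ∈ Icc (-1:ℝ) 1, (y - x) ^ 2 ≤ (z - x) ^ 2}

/-- Hyper-objective `ψ(x) = min_{y ∈ S(x)} (−y)` for `f(x,y) = −y`. -/
noncomputable def psi19 (x : ℝ) : ℝ :=
  sInf ((fun y => -y) '' S19 x)

/-- Penalized hyper-objective
`ψ_σ(x) = σ⁻¹ (min_{y∈[−1,1]} (−σ y + (y−x)²) − min_{z∈[−1,1]} (z−x)²)`. -/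
noncomputable def psiSig19 (σ x : ℝ) : ℝ :=
  σ⁻¹ * (sInf ((fun y => -(σ * y) + (y - x) ^ 2) '' Icc (-1:ℝ) 1)
    - sInf ((fun z => (z - x) ^ 2) '' Icc (-1:ℝ) 1))

open Topology Asymptotics

theorem IsMinOn.csInf_image_eq {α β : Type*} [ConditionallyCompleteLinearOrder β] {f : α → β}
    {s : Set α} {m : α} (hm : m ∈ s) (h : IsMinOn f s m) : sInf (f '' s) = f m :=
  IsLeast.csInf_eq ⟨mem_image_of_mem f hm, forall_mem_image.2 (isMinOn_iff.1 h)⟩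

theorem hasDerivAt_max_zero_sq (t : ℝ) :
    HasDerivAt (fun s : ℝ => max s 0 ^ 2) (2 * max t 0) t := by
  rcases lt_trichotomy t 0 with ht | rfl | ht
  · rw [max_eq_right ht.le, mul_zero]
    refine (hasDerivAt_const t (0 : ℝ)).congr_of_eventuallyEq ?_
    filter_upwards [Iio_mem_nhds ht] with s hs
    simp [max_eq_right (mem_Iio.1 hs).le]
  · rw [max_self, mul_zero, hasDerivAt_iff_isLittleO_nhds_zero]
    have hbound : (fun s : ℝ => max s 0 ^ 2) =O[𝓝 0] fun s => s ^ 2 := by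
      refine isBigO_of_le _ fun s => ?_
      rcases le_total s 0 with hs | hs <;> simp [hs, sq_nonneg]
    simpa using hbound.trans_isLittleO (isLittleO_pow_id one_lt_two)
  · rw [max_eq_left ht.le]
    refine (hasDerivAt_pow 2 t).congr_of_eventuallyEq ?_ |>.congr_deriv (by ring)
    filter_upwards [Ioi_mem_nhds ht] with s hs
    simp [max_eq_left (mem_Ioi.1 hs).le]

section Projection

variable {a b : ℝ} (h : a ≤ b)

theorem sq_projIcc_sub_le (x : ℝ) {z : ℝ} (hz : z ∈ Icc a b) :
    ((projIcc a b h x : ℝ) - x) ^ 2 ≤ (z - x) ^ 2 := by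
  obtain ⟨hza, hzb⟩ := hz
  rcases le_total x a with hxa | hax
  · rw [projIcc_of_le_left h hxa]; nlinarith
  rcases le_total b x with hbx | hxb
  · rw [projIcc_of_right_le h hbx]; nlinarith
  · rw [projIcc_of_mem h ⟨hax, hxb⟩]; simp [sq_nonneg]

theorem sInf_image_sq_sub_Icc (x : ℝ) :
    sInf ((fun z => (z - x) ^ 2) '' Icc a b) = ((projIcc a b h x : ℝ) - x) ^ 2 :=
  IsMinOn.csInf_image_eq (m := (projIcc a b h x : ℝ)) (projIcc a b h x).2
    (isMinOn_iff.2 fun _ hz => sq_projIcc_sub_le h x hz)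

theorem sInf_image_neg_mul_add_sq_sub_Icc (σ x : ℝ) :
    sInf ((fun y => -(σ * y) + (y - x) ^ 2) '' Icc a b) =
      ((projIcc a b h (x + σ / 2) : ℝ) - (x + σ / 2)) ^ 2 - σ * x - σ ^ 2 / 4 := by
  have hmin : IsMinOn (fun y => -(σ * y) + (y - x) ^ 2) (Icc a b) (projIcc a b h (x + σ / 2)) :=
    isMinOn_iff.2 fun z hz => by nlinarith [sq_projIcc_sub_le h (x + σ / 2) hz]
  rw [IsMinOn.csInf_image_eq (projIcc a b h (x + σ / 2)).2 hmin]
  ring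

/-- The minimiser is unique: the midpoint of two minimisers would be strictly better. -/
theorem setOf_sq_sub_le_eq_projIcc (x : ℝ) :
    {y ∈ Icc a b | ∀ z ∈ Icc a b, (y - x) ^ 2 ≤ (z - x) ^ 2} =
      {(projIcc a b h x : ℝ)} := by
  ext y
  refine ⟨fun ⟨hy, hmin⟩ => ?_, ?_⟩
  · set p : ℝ := (projIcc a b h x : ℝ)
    have hp : p ∈ Icc a b := (projIcc a b h x).2
    have hmid : (y + p) / 2 ∈ Icc a b := ⟨by linarith [hy.1, hp.1], by linarith [hy.2, hp.2]⟩
    have hyp := hmin p hp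
    have hpm := sq_projIcc_sub_le h x hmid
    have hsq : (y - p) ^ 2 = 0 := le_antisymm (by nlinarith) (sq_nonneg _)
    exact sub_eq_zero.1 (pow_eq_zero_iff two_ne_zero |>.1 hsq)
  · rintro rfl
    exact ⟨(projIcc a b h x).2, fun z hz => sq_projIcc_sub_le h x hz⟩

theorem hasDerivAt_sq_projIcc_sub (x : ℝ) :
    HasDerivAt (fun y => ((projIcc a b h y : ℝ) - y) ^ 2) (2 * (x - projIcc a b h x)) x := by
  have hsplit : (fun y => ((projIcc a b h y : ℝ) - y) ^ 2) =
      fun y => max (a - y) 0 ^ 2 + max (y - b) 0 ^ 2 := by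
    funext y
    rcases le_total y a with hya | hay
    · rw [projIcc_of_le_left h hya, max_eq_left (by linarith), max_eq_right (by linarith)]; ring
    rcases le_total b y with hby | hyb
    · rw [projIcc_of_right_le h hby, max_eq_right (by linarith), max_eq_left (by linarith)]; ring
    · rw [projIcc_of_mem h ⟨hay, hyb⟩, max_eq_right (by linarith), max_eq_right (by linarith)]
      ring
  rw [hsplit]
  refine (((hasDerivAt_max_zero_sq (a - x)).comp x ((hasDerivAt_id x).const_sub a)).add
    ((hasDerivAt_max_zero_sq (x - b)).comp x ((hasDerivAt_id x).sub_const b))).congr_deriv ?_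
  rcases le_total x a with hxa | hax
  · rw [projIcc_of_le_left h hxa, max_eq_left (by linarith), max_eq_right (by linarith)]; ring
  rcases le_total b x with hbx | hxb
  · rw [projIcc_of_right_le h hbx, max_eq_right (by linarith), max_eq_left (by linarith)]; ring
  · rw [projIcc_of_mem h ⟨hax, hxb⟩, max_eq_right (by linarith), max_eq_right (by linarith)]
    ring

end Projection

theorem not_differentiableWithinAt_of_hasDerivWithinAt_Iic_Ici {f : ℝ → ℝ} {x d₁ d₂ : ℝ}
    {s : Set ℝ} (hs : s ∈ 𝓝 x) (h₁ : HasDerivWithinAt f d₁ (Iic x) x)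
    (h₂ : HasDerivWithinAt f d₂ (Ici x) x) (hne : d₁ ≠ d₂) :
    ¬ DifferentiableWithinAt ℝ f s x := by
  intro hf
  have hd := (hf.differentiableAt hs).hasDerivAt
  exact hne (((uniqueDiffWithinAt_Iic x).eq_deriv _ h₁ hd.hasDerivWithinAt).trans
    ((uniqueDiffWithinAt_Ici x).eq_deriv _ hd.hasDerivWithinAt h₂))

noncomputable def projY (x : ℝ) : ℝ := projIcc (-1 : ℝ) 1 (by norm_num) x

theorem psi19_eq_neg_projY (x : ℝ) : psi19 x = -projY x := by
  rw [psi19, S19, setOf_sq_sub_le_eq_projIcc, image_singleton, csInf_singleton, projY]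

theorem psi19_of_le_neg_one {x : ℝ} (hx : x ≤ -1) : psi19 x = 1 := by
  simp [psi19_eq_neg_projY, projY, projIcc_of_le_left _ hx]

theorem psi19_of_mem_Icc {x : ℝ} (hx : x ∈ Icc (-1 : ℝ) 1) : psi19 x = -x := by
  simp [psi19_eq_neg_projY, projY, projIcc_of_mem _ hx]

theorem psi19_of_one_le {x : ℝ} (hx : 1 ≤ x) : psi19 x = -1 := by
  simp [psi19_eq_neg_projY, projY, projIcc_of_right_le _ hx]

theorem hasDerivWithinAt_psi19_Icc {x : ℝ} (hx : x ∈ Icc (-1 : ℝ) 1) :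
    HasDerivWithinAt psi19 (-1) (Icc (-1) 1) x :=
  (hasDerivAt_neg x).hasDerivWithinAt.congr_of_mem (fun _ hy => psi19_of_mem_Icc hy) hx

theorem hasDerivAt_psiSig19 (σ x : ℝ) :
    HasDerivAt (psiSig19 σ) (σ⁻¹ * (2 * (projY x - projY (x + σ / 2)))) x := by
  have hD := hasDerivAt_sq_projIcc_sub (a := -1) (b := 1) (by norm_num)
  have hform : psiSig19 σ = fun y => σ⁻¹ * ((projY (y + σ / 2) - (y + σ / 2)) ^ 2 - σ * y
      - σ ^ 2 / 4 - (projY y - y) ^ 2) := by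
    funext y
    rw [psiSig19, sInf_image_neg_mul_add_sq_sub_Icc (by norm_num),
      sInf_image_sq_sub_Icc (by norm_num)]
    rfl
  rw [hform]
  refine ((((hD (x + σ / 2)).comp x ((hasDerivAt_id x).add_const (σ / 2))).sub
    ((hasDerivAt_id x).const_mul σ)).sub_const (σ ^ 2 / 4) |>.sub (hD x)).const_mul σ⁻¹
    |>.congr_deriv ?_
  unfold projY
  ring

/-- For the bilevel instance `f(x,y) = −y`, `g(x,y) = (y−x)²` on
`X = [−2,2]`, `Y = [−1,1]`: (i) `ψ(x) = 1` on `[−2,−1]`, `ψ(x) = −x` on `[−1,1]`,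
`ψ(x) = −1` on `[1,2]`, so `ψ` is not differentiable at `−1` nor at `1`;
(ii) for every `σ ∈ (0,1]`, `ψ_σ` is differentiable at `1` and at `−1` with
`ψ_σ′(1) = 0` and `ψ_σ′(−1) = −1`. -/
theorem stmt19 :
    (∀ x ∈ Icc (-2:ℝ) (-1), psi19 x = 1) ∧
    (∀ x ∈ Icc (-1:ℝ) 1, psi19 x = -x) ∧
    (∀ x ∈ Icc (1:ℝ) 2, psi19 x = -1) ∧
    ¬ DifferentiableWithinAt ℝ psi19 (Icc (-2:ℝ) 2) (-1) ∧
    ¬ DifferentiableWithinAt ℝ psi19 (Icc (-2:ℝ) 2) 1 ∧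
    (∀ σ ∈ Ioc (0:ℝ) 1,
      HasDerivAt (psiSig19 σ) 0 1 ∧ HasDerivAt (psiSig19 σ) (-1) (-1)) := by
  refine ⟨fun x hx => psi19_of_le_neg_one hx.2, fun x hx => psi19_of_mem_Icc hx,
    fun x hx => psi19_of_one_le hx.1, ?_, ?_, ?_⟩
  · refine not_differentiableWithinAt_of_hasDerivWithinAt_Iic_Ici
      (Icc_mem_nhds (by norm_num) (by norm_num)) ?_
      ((hasDerivWithinAt_psi19_Icc (by norm_num)).mono_of_mem_nhdsWithin
        (Icc_mem_nhdsGE (by norm_num))) (d₁ := 0) (by norm_num)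
    exact (hasDerivWithinAt_const _ _ 1).congr (fun _ hy => psi19_of_le_neg_one hy)
      (psi19_of_le_neg_one le_rfl)
  · refine not_differentiableWithinAt_of_hasDerivWithinAt_Iic_Ici
      (Icc_mem_nhds (by norm_num) (by norm_num))
      ((hasDerivWithinAt_psi19_Icc (by norm_num)).mono_of_mem_nhdsWithin
        (Icc_mem_nhdsLE (by norm_num))) ?_ (d₂ := 0) (by norm_num)
    exact (hasDerivWithinAt_const _ _ (-1)).congr (fun _ hy => psi19_of_one_le hy)
      (psi19_of_one_le le_rfl)
  · rintro σ ⟨hσ₀, hσ₁⟩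
    constructor
    · convert hasDerivAt_psiSig19 σ 1 using 1
      simp [projY, projIcc_of_right_le _ (le_add_of_nonneg_right (by positivity : 0 ≤ σ / 2))]
    · convert hasDerivAt_psiSig19 σ (-1) using 1
      rw [projY, projY, projIcc_left, projIcc_of_mem _ ⟨by linarith, by linarith⟩]
      field_simp
      ring
end
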